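/- arXiv:2403.07597 — 5 statements merged into one kernel-verified Lean document; each statement's English description precedes it below -/
import Mathlib

section
/- Every semicomplete multipartite digraph with c partite sets contains a good generalized path of length exactly c-1 (a generalized path using exactly c-1 arcs that visits every partite set). -/
open Classical

universe u v

/-- A semicomplete multipartite digraph: `A` is the arc relation and `part` assigns to
each vertex its partite set.  There are no arcs inside a partite set and at least one
arc between any two vertices of different partite sets. -/
structure IsSMD {V : Type u} {K : Type v} (A : V → V → Prop) (part : V → K) : Prop where
  noInside : ∀ x y : V, part x = part y → ¬ A x y
  adj : ∀ x y : V, part x ≠ part y → A x y ∨ A y x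

/-- An extended semicomplete digraph: a semicomplete multipartite digraph in which any
two vertices of the same partite set have identical in- and out-neighbourhoods. -/
def IsESD {V : Type u} {K : Type v} (A : V → V → Prop) (part : V → K) : Prop :=
  IsSMD A part ∧ ∀ x y : V, part x = part y →
    (∀ z, A x z ↔ A y z) ∧ (∀ z, A z x ↔ A z y)

/-- A generalized path (G-path): a sequence of distinct vertices in which each
consecutive pair is either an arc or a pair of vertices in the same partite set. -/
structure GPath {V : Type u} {K : Type v} (A : V → V → Prop) (part : V → K) where
  verts : List V
  ne : verts ≠ []
  nodup : verts.Nodup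
  chain : verts.Chain' fun a b => A a b ∨ part a = part b

/-- A generalized cycle (G-cycle): as a G-path, but also the pair consisting of the
last and the first vertex is an arc or lies in one partite set. -/
structure GCycle {V : Type u} {K : Type v} (A : V → V → Prop) (part : V → K)
    extends GPath A part where
  close : A (verts.getLast ne) (verts.head ne) ∨
    part (verts.getLast ne) = part (verts.head ne)

variable {V : Type u} {K : Type v} {A : V → V → Prop} {part : V → K}

/-- The length of a G-path: the number of arcs it uses. -/
noncomputable def GPath.len (P : GPath A part) : ℕ :=
  (P.verts.zip P.verts.tail).countP fun q => decide (A q.1 q.2)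

/-- The length of a G-cycle: the number of arcs it uses (cyclically). -/
noncomputable def GCycle.len (C : GCycle A part) : ℕ :=
  (C.toGPath.verts.zip (C.toGPath.verts.rotate 1)).countP fun q => decide (A q.1 q.2)

/-- `x` and `y` are (cyclically) consecutive on the G-cycle `C`, `y` following `x`. -/
def GCycle.consec (C : GCycle A part) (x y : V) : Prop :=
  (x, y) ∈ C.toGPath.verts.zip (C.toGPath.verts.rotate 1)

/-- The pair `(x, y)` (an `(x,y)`-G-path) has a partner on the G-cycle `C`:
there are consecutive vertices `w, w'` of `C` with `w → x` and `y → w'`. -/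
def GCycle.partner (C : GCycle A part) (x y : V) : Prop :=
  ∃ w w' : V, C.consec w w' ∧ A w x ∧ A y w'

/-- `v` is out-singular with respect to `C` (that is, `v ⇒ C`). -/
def GCycle.OutSingular (C : GCycle A part) (v : V) : Prop :=
  ∀ w ∈ C.toGPath.verts, (part v ≠ part w → A v w) ∧ ¬ A w v

/-- `v` is in-singular with respect to `C` (that is, `C ⇒ v`). -/
def GCycle.InSingular (C : GCycle A part) (v : V) : Prop :=
  ∀ w ∈ C.toGPath.verts, (part v ≠ part w → A w v) ∧ ¬ A v w

/-- `v` is singular with respect to `C`. -/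
def GCycle.SingularWrt (C : GCycle A part) (v : V) : Prop :=
  C.OutSingular v ∨ C.InSingular v

/-- `C₁ ≃> C₂`: `C₁` has singular vertices w.r.t. `C₂`, all of which are out-singular,
and `C₂` has singular vertices w.r.t. `C₁`, all of which are in-singular. -/
def SimGt (C₁ C₂ : GCycle A part) : Prop :=
  (∃ v ∈ C₁.toGPath.verts, C₂.SingularWrt v) ∧
  (∀ v ∈ C₁.toGPath.verts, C₂.SingularWrt v → C₂.OutSingular v) ∧
  (∃ v ∈ C₂.toGPath.verts, C₁.SingularWrt v) ∧
  (∀ v ∈ C₂.toGPath.verts, C₁.SingularWrt v → C₁.InSingular v)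

/-- A G-cycle subdigraph: a collection of pairwise vertex-disjoint G-cycles. -/
structure GCSub {V' : Type u} {K' : Type v} (A' : V' → V' → Prop) (part' : V' → K') where
  cycles : List (GCycle A' part')
  disj : cycles.Pairwise fun C C' => ∀ x ∈ C.toGPath.verts, x ∉ C'.toGPath.verts

/-- The total number of arcs used by a G-cycle subdigraph. -/
noncomputable def GCSub.arcs (F : GCSub A part) : ℕ :=
  (F.cycles.map GCycle.len).sum

/-- A G-cycle factor: a G-cycle subdigraph covering all vertices. -/
def GCSub.IsFactor (F : GCSub A part) : Prop :=
  ∀ v : V, ∃ C ∈ F.cycles, v ∈ C.toGPath.verts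

/-- Strong connectivity of a digraph. -/
def IsStrong (A : V → V → Prop) : Prop :=
  ∀ x y : V, Relation.ReflTransGen A x y

/-- Strong connectivity after deleting the vertex set `X`. -/
def IsStrongOutside (A : V → V → Prop) (X : Set V) : Prop :=
  ∀ x y : V, x ∉ X → y ∉ X →
    Relation.ReflTransGen (fun a b => A a b ∧ a ∉ X ∧ b ∉ X) x y

/-- `k`-strong connectivity. -/
def KStrong [Fintype V] (A : V → V → Prop) (k : ℕ) : Prop :=
  k + 1 ≤ Fintype.card V ∧
    ∀ X : Finset V, X.card ≤ k - 1 → IsStrongOutside A (↑X : Set V)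

/-- Insertion lemma for building Hamiltonian paths in tournaments. -/
lemma insert_chain {α : Type*} {R : α → α → Prop} (x : α) :
    ∀ l : List α, l.Chain' R → (∀ a ∈ l, R x a ∨ R a x) →
    ∃ l' : List α, l'.Perm (x :: l) ∧ l'.Chain' R ∧
      (l'.head? = some x ∨ l'.head? = l.head?) := by
  intro l
  induction l with
  | nil => intro _ _; exact ⟨[x], List.Perm.refl _, List.isChain_singleton x, Or.inl rfl⟩
  | cons a t ih =>
    intro hchain htot
    rcases htot a (List.mem_cons_self) with hxa | hax
    · exact ⟨x :: a :: t, List.Perm.refl _,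
        List.isChain_cons_cons.mpr ⟨hxa, hchain⟩, Or.inl rfl⟩
    · obtain ⟨t', hperm, hchain', hhead⟩ := ih hchain.tail
        (fun b hb => htot b (List.mem_cons_of_mem a hb))
      refine ⟨a :: t', ?_, ?_, Or.inr rfl⟩
      · exact (hperm.cons a).trans (List.Perm.swap x a t)
      · rw [List.Chain', List.isChain_cons]
        refine ⟨?_, hchain'⟩
        intro y hy
        rcases hhead with h | h
        · rw [h, Option.mem_some_iff] at hy; subst hy; exact hax
        · rw [h] at hy
          cases t with
          | nil => simp at hy
          | cons b s =>
            simp only [List.head?_cons, Option.mem_def, Option.some.injEq] at hy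
            subst hy
            exact (List.isChain_cons_cons.mp hchain).1

/-- Every finite "tournament-like" list has a Hamiltonian-path ordering. -/
lemma tourn_path {α : Type*} {R : α → α → Prop} :
    ∀ l : List α, l.Nodup → (∀ a ∈ l, ∀ b ∈ l, a ≠ b → R a b ∨ R b a) →
    ∃ l' : List α, l'.Perm l ∧ l'.Chain' R := by
  intro l
  induction l with
  | nil => exact fun _ _ => ⟨[], List.Perm.refl _, List.isChain_nil⟩
  | cons x t ih =>
    intro hnd htot
    obtain ⟨t', hperm, hchain⟩ := ih hnd.of_cons
      (fun a ha b hb hab => htot a (List.mem_cons_of_mem x ha)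
        b (List.mem_cons_of_mem x hb) hab)
    obtain ⟨l', hperm', hchain', _⟩ := insert_chain x t' hchain
      (fun a ha => by
        have hat : a ∈ t := hperm.mem_iff.mp ha
        have hxa : x ≠ a := fun h => (List.nodup_cons.mp hnd).1 (h ▸ hat)
        exact htot x (List.mem_cons_self) a (List.mem_cons_of_mem x hat) hxa)
    exact ⟨l', hperm'.trans (hperm.cons x), hchain'⟩

lemma count_aux {α : Type*} {R : α → α → Prop} :
    ∀ l : List α, l.Chain' R →
      (l.zip l.tail).countP (fun q => decide (R q.1 q.2)) = l.length - 1 := by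
  intro l
  induction l with
  | nil => intro _; rfl
  | cons a t ih =>
    intro hchain
    cases t with
    | nil => rfl
    | cons b s =>
      have hR : R a b := (List.isChain_cons_cons.mp hchain).1
      have ht := ih (List.isChain_cons_cons.mp hchain).2
      simp only [List.tail_cons, List.zip_cons_cons, List.countP_cons] at ht ⊢
      rw [ht]
      simp [hR]

/-- Every semicomplete multipartite digraph with `c` partite sets contains
a good generalized path of length exactly `c - 1`. -/
theorem stmt1 {V : Type} [Fintype V] [Nonempty V] {c : ℕ}
    {A : V → V → Prop} {part : V → Fin c}
    (hSMD : IsSMD A part) (hsurj : Function.Surjective part) :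
    ∃ P : GPath A part, P.len = c - 1 ∧ ∀ i : Fin c, ∃ x ∈ P.verts, part x = i := by
  classical
  set rep : Fin c → V := fun i => Classical.choose (hsurj i) with hrep
  have hrep_spec : ∀ i, part (rep i) = i := fun i => Classical.choose_spec (hsurj i)
  have hrep_inj : Function.Injective rep := fun i j h => by
    rw [← hrep_spec i, ← hrep_spec j, h]
  set l : List V := (List.finRange c).map rep with hl
  have hlen : l.length = c := by simp [hl]
  have hnd : l.Nodup := (List.nodup_finRange c).map hrep_inj
  have htot : ∀ a ∈ l, ∀ b ∈ l, a ≠ b → A a b ∨ A b a := by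
    intro a ha b hb hab
    obtain ⟨i, _, rfl⟩ := List.mem_map.mp ha
    obtain ⟨j, _, rfl⟩ := List.mem_map.mp hb
    have hij : i ≠ j := fun h => hab (by rw [h])
    have : part (rep i) ≠ part (rep j) := by
      rw [hrep_spec, hrep_spec]; exact hij
    exact hSMD.adj _ _ this
  obtain ⟨l', hperm, hchain⟩ := tourn_path l hnd htot
  have hlen' : l'.length = c := hperm.length_eq.trans hlen
  have hc : 0 < c := Fin.pos_iff_nonempty.mpr ⟨part (Classical.arbitrary V)⟩
  have hne : l' ≠ [] := by
    intro h; rw [h] at hlen'; simp at hlen'; omega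
  refine ⟨⟨l', hne, hperm.nodup_iff.mpr hnd, hchain.imp (fun a b h => Or.inl h)⟩, ?_, ?_⟩
  · show (l'.zip l'.tail).countP _ = c - 1
    rw [count_aux l' hchain, hlen']
  · intro i
    refine ⟨rep i, ?_, hrep_spec i⟩
    exact hperm.mem_iff.mpr (List.mem_map.mpr ⟨i, List.mem_finRange i, rfl⟩)
end

section
/- In a strongly connected semicomplete multipartite digraph, every maximum generalized cycle (a longest G-cycle that among all longest G-cycles has the maximum number of vertices) is spanning, i.e., contains all vertices of the digraph. -/
open Classical

universe u v

variable {V : Type u} {K : Type v} {A : V → V → Prop} {part : V → K}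

section Aux

noncomputable def wt (A : V → V → Prop) (a b : V) : ℕ := if A a b then 1 else 0
noncomputable def pw (A : V → V → Prop) (l : List V) : ℕ :=
  (l.zip l.tail).countP fun q => decide (A q.1 q.2)
noncomputable def cw (A : V → V → Prop) (l : List V) : ℕ :=
  (l.zip (l.rotate 1)).countP fun q => decide (A q.1 q.2)

variable {A : V → V → Prop}

lemma wt_le_one (a b : V) : wt A a b ≤ 1 := by unfold wt; split <;> omega
lemma wt_pos (h : A a b) : wt A a b = 1 := by simp [wt, h]
lemma wt_zero (h : ¬ A a b) : wt A a b = 0 := by simp [wt, h]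

lemma countP_singleton (a : V × V) :
    [a].countP (fun q => decide (A q.1 q.2)) = wt A a.1 a.2 := by
  simp only [List.countP_cons, List.countP_nil, wt]
  split <;> simp_all

lemma rotate_one_eq (l : List V) (h : l ≠ []) : l.rotate 1 = l.tail ++ [l.head h] := by
  cases l with
  | nil => simp at h
  | cons x xs => simp [List.rotate_cons_succ]

lemma zip_tail_append (l : List V) (h : l ≠ []) (a : V) :
    l.zip (l.tail ++ [a]) = l.zip l.tail ++ [(l.getLast h, a)] := by
  induction l with
  | nil => simp at h
  | cons x xs ih =>
    cases xs with
    | nil => simp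
    | cons y ys =>
      have ih' := ih (by simp)
      simp only [List.tail_cons] at ih'
      simp only [List.tail_cons, List.zip_cons_cons, List.cons_append, ih']
      simp [List.getLast_cons]

lemma cw_eq_pw (l : List V) (h : l ≠ []) :
    cw A l = pw A l + wt A (l.getLast h) (l.head h) := by
  unfold cw pw
  rw [rotate_one_eq l h, zip_tail_append l h, List.countP_append, countP_singleton]

lemma pw_cons (x y : V) (l : List V) : pw A (x :: y :: l) = wt A x y + pw A (y :: l) := by
  unfold pw
  simp [List.countP_cons, wt]
  split <;> simp_all [Nat.add_comm]

lemma pw_concat (l : List V) (h : l ≠ []) (a : V) :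
    pw A (l ++ [a]) = pw A l + wt A (l.getLast h) a := by
  induction l with
  | nil => simp at h
  | cons x xs ih =>
    cases xs with
    | nil =>
      show pw A [x, a] = _
      rw [pw_cons]
      simp [pw]
    | cons y ys =>
      rw [List.cons_append, List.cons_append] at *
      rw [pw_cons, ih (by simp)]
      rw [List.getLast_cons (l := y::ys) (by simp)]
      have : pw A (x :: y :: ys) = wt A x y + pw A (y::ys) := pw_cons x y ys
      omega

lemma pw_cons' (x : V) (l : List V) (h : l ≠ []) :
    pw A (x :: l) = wt A x (l.head h) + pw A l := by
  cases l with
  | nil => simp at h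
  | cons y ys => simp [pw_cons]

lemma cw_rotate_one (l : List V) : cw A (l.rotate 1) = cw A l := by
  cases l with
  | nil => simp [cw]
  | cons x xs =>
    rw [show (x::xs).rotate 1 = xs ++ [x] by simp [List.rotate_cons_succ]]
    cases xs with
    | nil => simp
    | cons y ys =>
      rw [cw_eq_pw (A:=A) ((y::ys)++[x]) (by simp), cw_eq_pw (A:=A) (x::y::ys) (by simp),
        pw_concat (A:=A) (y::ys) (by simp) x, pw_cons]
      simp [List.getLast_append, List.getLast_cons]
      omega

lemma cw_rotate (l : List V) (n : ℕ) : cw A (l.rotate n) = cw A l := by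
  induction n with
  | zero => simp
  | succ k ih =>
    have : l.rotate (k+1) = (l.rotate k).rotate 1 := by
      rw [List.rotate_rotate]
    rw [this, cw_rotate_one, ih]


def CycChain (E : V → V → Prop) (l : List V) : Prop :=
  ∃ h : l ≠ [], l.Chain' E ∧ E (l.getLast h) (l.head h)

lemma cycChain_rot1 {E : V → V → Prop} {l : List V} (h : CycChain E l) :
    CycChain E (l.rotate 1) := by
  obtain ⟨hne, hc, hcl⟩ := h
  cases l with
  | nil => simp at hne
  | cons x xs =>
    cases xs with
    | nil =>
      refine ⟨by simp, by simp; exact List.isChain_singleton x, ?_⟩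
      simpa using hcl
    | cons y ys =>
      rw [show (x::y::ys).rotate 1 = (y::ys) ++ [x] by simp [List.rotate_cons_succ]]
      refine ⟨by simp, ?_, ?_⟩
      · unfold List.Chain'; rw [List.isChain_append]
        refine ⟨hc.tail, List.isChain_singleton x, ?_⟩
        intro a ha b hb
        simp at ha hb
        subst hb
        rw [List.getLast?_eq_getLast (l := y::ys) (by simp)] at ha
        rw [show a = (y::ys).getLast (by simp) from by simpa using ha.symm]
        simpa [List.getLast_cons] using hcl
      · rw [List.getLast_append (l := y::ys)]
        simpa using (List.isChain_cons_cons.mp hc).1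

lemma cycChain_rot {E : V → V → Prop} {l : List V} (h : CycChain E l) (n : ℕ) :
    CycChain E (l.rotate n) := by
  induction n with
  | zero => simpa using h
  | succ k ih =>
    rw [show l.rotate (k+1) = (l.rotate k).rotate 1 from by rw [List.rotate_rotate]]
    exact cycChain_rot1 ih

variable {part : V → K}

lemma gcycle_cycChain (C : GCycle A part) :
    CycChain (fun a b => A a b ∨ part a = part b) C.toGPath.verts :=
  ⟨C.toGPath.ne, C.toGPath.chain, C.close⟩

/-- Rotation of a G-cycle. -/
noncomputable def GCycle.rot (C : GCycle A part) (n : ℕ) : GCycle A part := by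
  have h := cycChain_rot (gcycle_cycChain C) n
  exact {
    verts := C.toGPath.verts.rotate n
    ne := h.1
    nodup := List.nodup_rotate.mpr C.toGPath.nodup
    chain := h.2.1
    close := h.2.2 }

lemma rot_verts (C : GCycle A part) (n : ℕ) :
    (C.rot n).toGPath.verts = C.toGPath.verts.rotate n := rfl

lemma len_eq_cw (C : GCycle A part) : C.len = cw A C.toGPath.verts := rfl

lemma rot_len (C : GCycle A part) (n : ℕ) : (C.rot n).len = C.len := by
  rw [len_eq_cw, len_eq_cw, rot_verts, cw_rotate]


lemma rot_mem (C : GCycle A part) (n : ℕ) (z : V) :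
    z ∈ (C.rot n).toGPath.verts ↔ z ∈ C.toGPath.verts := by
  rw [rot_verts]; exact List.mem_rotate

lemma rot_length (C : GCycle A part) (n : ℕ) :
    (C.rot n).toGPath.verts.length = C.toGPath.verts.length := by
  rw [rot_verts]; exact List.length_rotate _ _

lemma consec_getElem (C : GCycle A part) {i j : ℕ}
    (hi : i < C.toGPath.verts.length) (hj : j < C.toGPath.verts.length)
    (hij : (i+1) % C.toGPath.verts.length = j) :
    C.consec (C.toGPath.verts[i]'hi) (C.toGPath.verts[j]'hj) := by
  set l := C.toGPath.verts with hl
  have hz : i < (l.zip (l.rotate 1)).length := by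
    simpa using hi
  have h1 : (l.zip (l.rotate 1))[i]'hz = (l[i]'hi, (l.rotate 1)[i]'(by simpa using hi)) :=
    List.getElem_zip
  have h2 : (l.rotate 1)[i]'(by simpa using hi) = l[(i+1) % l.length]'(Nat.mod_lt _ (by omega)) := by
    rw [List.getElem_rotate]
  have h3 : l[(i+1) % l.length]'(Nat.mod_lt _ (by omega)) = l[j]'hj := by
    simp only [hij]
  have hmem := List.getElem_mem hz
  rw [h1, h2, h3] at hmem
  exact hmem

lemma consec_mem (C : GCycle A part) {x y : V} (h : C.consec x y) :
    x ∈ C.toGPath.verts ∧ y ∈ C.toGPath.verts := by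
  have := List.of_mem_zip h
  exact ⟨this.1, List.mem_rotate.mp this.2⟩

lemma consec_propagate (C : GCycle A part) (P : V → Prop)
    (hstep : ∀ x y, C.consec x y → P x → P y) {a : V}
    (ha : a ∈ C.toGPath.verts) (hPa : P a) : ∀ w ∈ C.toGPath.verts, P w := by
  set l := C.toGPath.verts with hl
  have hn : 0 < l.length := List.length_pos_iff.mpr C.toGPath.ne
  obtain ⟨i, hi, rfl⟩ := List.getElem_of_mem ha
  have key : ∀ k : ℕ, P (l[(i+k) % l.length]'(Nat.mod_lt _ hn)) := by
    intro k
    induction k with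
    | zero =>
      have : (i + 0) % l.length = i := by simpa using Nat.mod_eq_of_lt hi
      simp only [this]; exact hPa
    | succ k ih =>
      refine hstep _ _ (consec_getElem C (Nat.mod_lt _ hn) (Nat.mod_lt _ hn) ?_) ih
      rw [Nat.mod_add_mod]
      ring_nf
  intro w hw
  obtain ⟨j, hj, rfl⟩ := List.getElem_of_mem hw
  have : (i + (l.length - i + j)) % l.length = j := by
    rw [show i + (l.length - i + j) = l.length + j by omega, Nat.add_mod_left,
      Nat.mod_eq_of_lt hj]
  have hk := key (l.length - i + j)
  simpa only [this] using hk

lemma consec_pred (C : GCycle A part) {w : V} (hw : w ∈ C.toGPath.verts) :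
    ∃ x ∈ C.toGPath.verts, C.consec x w := by
  set l := C.toGPath.verts with hl
  have hn : 0 < l.length := List.length_pos_iff.mpr C.toGPath.ne
  obtain ⟨j, hj, rfl⟩ := List.getElem_of_mem hw
  have hlt : (j + l.length - 1) % l.length < l.length := Nat.mod_lt _ hn
  refine ⟨l[(j + l.length - 1) % l.length]'hlt, List.getElem_mem hlt, ?_⟩
  refine consec_getElem C hlt hj ?_
  rw [Nat.mod_add_mod, show j + l.length - 1 + 1 = l.length + j by omega,
    Nat.add_mod_left, Nat.mod_eq_of_lt hj]

lemma consec_edge (C : GCycle A part) {x y : V} (h : C.consec x y) :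
    A x y ∨ part x = part y := by
  have hn : 0 < C.toGPath.verts.length := List.length_pos_iff.mpr C.toGPath.ne
  unfold GCycle.consec at h
  obtain ⟨i, hiz, hxy⟩ := List.getElem_of_mem h
  have hi : i < C.toGPath.verts.length := by simpa using hiz
  have h1 : (C.toGPath.verts.zip (C.toGPath.verts.rotate 1))[i]'hiz
      = (C.toGPath.verts[i]'hi, (C.toGPath.verts.rotate 1)[i]'(by simpa using hi)) :=
    List.getElem_zip
  rw [h1] at hxy
  have hx : C.toGPath.verts[i]'hi = x := (Prod.mk.injEq _ _ _ _).mp hxy |>.1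
  have hy : (C.toGPath.verts.rotate 1)[i]'(by simpa using hi) = y :=
    (Prod.mk.injEq _ _ _ _).mp hxy |>.2
  rw [List.getElem_rotate] at hy
  rcases Nat.lt_or_ge (i+1) C.toGPath.verts.length with hlt | hge
  · have hmod : (i + 1) % C.toGPath.verts.length = i + 1 := Nat.mod_eq_of_lt hlt
    simp only [hmod] at hy
    have := List.isChain_iff_getElem.mp C.toGPath.chain i (by omega)
    rw [hx, hy] at this
    exact this
  · have heq : i + 1 = C.toGPath.verts.length := by omega
    have hmod : (i + 1) % C.toGPath.verts.length = 0 := by rw [heq, Nat.mod_self]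
    simp only [hmod] at hy
    have hgl : C.toGPath.verts.getLast C.toGPath.ne = x := by
      rw [List.getLast_eq_getElem]
      simp only [show C.toGPath.verts.length - 1 = i from by omega]
      exact hx
    have hhd : C.toGPath.verts.head C.toGPath.ne = y := by
      rw [List.head_eq_getElem]
      exact hy
    have hcl := C.close
    rw [hgl, hhd] at hcl
    exact hcl

/-- rotate the cycle so that a given consecutive pair becomes (last, head) -/
lemma consec_rot (C : GCycle A part) {x y : V} (h : C.consec x y) :
    ∃ (D : GCycle A part), D.len = C.len ∧
      D.toGPath.verts.length = C.toGPath.verts.length ∧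
      (∀ z, z ∈ D.toGPath.verts ↔ z ∈ C.toGPath.verts) ∧
      D.toGPath.verts.getLast D.toGPath.ne = x ∧
      D.toGPath.verts.head D.toGPath.ne = y := by
  classical
  set l := C.toGPath.verts with hl
  have hn : 0 < l.length := List.length_pos_iff.mpr C.toGPath.ne
  unfold GCycle.consec at h
  obtain ⟨i, hiz, hxy⟩ := List.getElem_of_mem h
  have hi : i < l.length := by simpa using hiz
  have h1 : (l.zip (l.rotate 1))[i]'hiz
      = (l[i]'hi, (l.rotate 1)[i]'(by simpa using hi)) := List.getElem_zip
  rw [h1] at hxy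
  have hx : l[i]'hi = x := (Prod.mk.injEq _ _ _ _).mp hxy |>.1
  have hy : (l.rotate 1)[i]'(by simpa using hi) = y := (Prod.mk.injEq _ _ _ _).mp hxy |>.2
  rw [List.getElem_rotate] at hy
  set k := (i+1) % l.length with hk
  have hkl : k < l.length := Nat.mod_lt _ hn
  refine ⟨C.rot k, rot_len C k, rot_length C k, rot_mem C k, ?_, ?_⟩
  · rw [List.getLast_eq_getElem]
    simp only [rot_verts, List.length_rotate]
    rw [List.getElem_rotate]
    have : (l.length - 1 + k) % l.length = i := by
      rw [hk, Nat.add_mod_mod, show l.length - 1 + (i+1) = l.length + i by omega,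
        Nat.add_mod_left, Nat.mod_eq_of_lt hi]
    convert hx using 2
  · rw [List.head_eq_getElem]
    simp only [rot_verts]
    rw [List.getElem_rotate]
    have : (0 + k) % l.length = k := by
      rw [Nat.zero_add]; exact Nat.mod_eq_of_lt hkl
    convert hy using 2

lemma consec_last_head (C : GCycle A part) :
    C.consec (C.toGPath.verts.getLast C.toGPath.ne) (C.toGPath.verts.head C.toGPath.ne) := by
  have hn : 0 < C.toGPath.verts.length := List.length_pos_iff.mpr C.toGPath.ne
  rw [List.getLast_eq_getElem, List.head_eq_getElem]
  exact consec_getElem C (by omega) hn (by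
    rw [show C.toGPath.verts.length - 1 + 1 = C.toGPath.verts.length from by omega,
      Nat.mod_self])

variable (hSMD : IsSMD A part) (C : GCycle A part)
  (hlongest : ∀ C' : GCycle A part, C'.len ≤ C.len)
  (hmax : ∀ C' : GCycle A part, C'.len = C.len →
      C'.toGPath.verts.length ≤ C.toGPath.verts.length)

include hSMD hlongest hmax

lemma no_insert1 {x y v : V} (hc : C.consec x y) (hv : v ∉ C.toGPath.verts)
    (h1 : A x v ∨ part x = part v) (h2 : A v y ∨ part v = part y) : False := by
  obtain ⟨D, hDlen, hDvlen, hDmem, hlast, hhead⟩ := consec_rot C hc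
  have hne : D.toGPath.verts ≠ [] := D.toGPath.ne
  have hv' : v ∉ D.toGPath.verts := fun h => hv ((hDmem v).mp h)
  have hEl : A (D.toGPath.verts.getLast hne) v ∨ part (D.toGPath.verts.getLast hne) = part v := by
    rw [hlast]; exact h1
  let C' : GCycle A part :=
    { verts := D.toGPath.verts ++ [v]
      ne := by simp
      nodup := by simp [List.nodup_append, D.toGPath.nodup, hv']; rintro a ha rfl; exact hv' ha
      chain := List.isChain_append.mpr ⟨D.toGPath.chain, List.isChain_singleton v, by
        intro a ha b hb
        simp only [List.head?_cons, Option.mem_some_iff] at hb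
        rw [List.getLast?_eq_getLast hne, Option.mem_some_iff] at ha
        subst hb; subst ha
        exact hEl⟩
      close := by
        rw [List.getLast_append, List.head_append_left hne, hhead]
        exact h2 }
  have hlC' : C'.toGPath.verts = D.toGPath.verts ++ [v] := rfl
  have e1 : C'.len = pw A D.toGPath.verts + wt A x v + wt A v y := by
    rw [len_eq_cw, hlC', cw_eq_pw _ (by simp),
      pw_concat _ hne, List.getLast_append, List.head_append_left hne, hlast, hhead]
    simp
  have e2 : C.len = pw A D.toGPath.verts + wt A x y := by
    rw [← hDlen, len_eq_cw, cw_eq_pw _ hne, hlast, hhead]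
  have key : wt A x y ≤ wt A x v + wt A v y := by
    by_cases hA : A x y
    · have hp : part x ≠ part y := fun hp => hSMD.noInside x y hp hA
      rcases h1 with h1 | h1
      · rw [wt_pos h1]; have := wt_le_one (A := A) x y; omega
      · rcases h2 with h2 | h2
        · rw [wt_pos h2]; have := wt_le_one (A := A) x y; omega
        · exact absurd (h1.trans h2) hp
    · rw [wt_zero hA]; omega
  have h5 := hlongest C'
  have h6 : C'.len = C.len := by omega
  have h7 := hmax C' h6
  rw [hlC'] at h7
  simp only [List.length_append, List.length_singleton, hDvlen] at h7
  omega

lemma no_insert2 {x y u v : V} (hc : C.consec x y)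
    (hu : u ∉ C.toGPath.verts) (hv : v ∉ C.toGPath.verts) (huv : u ≠ v) (hA : A u v)
    (h1 : A x u ∨ part x = part u) (h2 : A v y ∨ part v = part y) : False := by
  obtain ⟨D, hDlen, hDvlen, hDmem, hlast, hhead⟩ := consec_rot C hc
  have hne : D.toGPath.verts ≠ [] := D.toGPath.ne
  have hu' : u ∉ D.toGPath.verts := fun h => hu ((hDmem u).mp h)
  have hv' : v ∉ D.toGPath.verts := fun h => hv ((hDmem v).mp h)
  have hEl : A (D.toGPath.verts.getLast hne) u ∨ part (D.toGPath.verts.getLast hne) = part u := by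
    rw [hlast]; exact h1
  let C' : GCycle A part :=
    { verts := D.toGPath.verts ++ [u, v]
      ne := by simp
      nodup := by simp [List.nodup_append, D.toGPath.nodup, hu', hv', huv]; exact fun a ha => ⟨fun h => hu' (h ▸ ha), fun h => hv' (h ▸ ha)⟩
      chain := List.isChain_append.mpr ⟨D.toGPath.chain, by
          simp [List.isChain_cons_cons, Or.inl hA], by
        intro a ha b hb
        simp only [List.head?_cons, Option.mem_some_iff] at hb
        rw [List.getLast?_eq_getLast hne, Option.mem_some_iff] at ha
        subst hb; subst ha
        exact hEl⟩
      close := by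
        have hgl : (D.toGPath.verts ++ [u, v]).getLast (by simp) = v := by
          rw [List.getLast_append_of_ne_nil _ (by simp)]; rfl
        rw [hgl, List.head_append_left hne, hhead]
        exact h2 }
  have hlC' : C'.toGPath.verts = D.toGPath.verts ++ [u, v] := rfl
  have e1 : C'.len = pw A D.toGPath.verts + wt A x u + wt A u v + wt A v y := by
    rw [len_eq_cw, hlC',
      show D.toGPath.verts ++ [u, v] = (D.toGPath.verts ++ [u]) ++ [v] from by simp,
      cw_eq_pw _ (by simp), pw_concat _ (by simp), pw_concat _ hne,
      List.getLast_append, List.getLast_append,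
      List.head_append_left (by simp [hne]), List.head_append_left hne, hlast, hhead]
    simp
  have e2 : C.len = pw A D.toGPath.verts + wt A x y := by
    rw [← hDlen, len_eq_cw, cw_eq_pw _ hne, hlast, hhead]
  have key : wt A x y ≤ wt A x u + wt A u v + wt A v y := by
    rw [wt_pos hA]
    have := wt_le_one (A := A) x y
    omega
  have h5 := hlongest C'
  have h6 : C'.len = C.len := by omega
  have h7 := hmax C' h6
  rw [hlC'] at h7
  simp only [List.length_append, List.length_cons, List.length_nil, hDvlen] at h7
  omega

lemma singular_dichotomy {v : V} (hv : v ∉ C.toGPath.verts) :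
    C.InSingular v ∨ C.OutSingular v := by
  by_cases hQ : ∃ a ∈ C.toGPath.verts, A a v ∨ part a = part v
  · left
    obtain ⟨a, ha, hQa⟩ := hQ
    have hall : ∀ w ∈ C.toGPath.verts, A w v ∨ part w = part v := by
      refine consec_propagate C _ ?_ ha hQa
      intro x y hcxy hQx
      by_cases hpy : part y = part v
      · exact Or.inr hpy
      · rcases hSMD.adj y v hpy with hyv | hvy
        · exact Or.inl hyv
        · exact absurd (no_insert1 hSMD C hlongest hmax hcxy hv hQx (Or.inl hvy)) not_false
    have hnoAv : ∀ w ∈ C.toGPath.verts, ¬ A v w := by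
      intro w hw hAvw
      obtain ⟨p, hp, hcp⟩ := consec_pred C hw
      exact no_insert1 hSMD C hlongest hmax hcp hv (hall p hp) (Or.inl hAvw)
    intro w hw
    refine ⟨fun hne => ?_, hnoAv w hw⟩
    rcases hSMD.adj v w hne with h | h
    · exact absurd h (hnoAv w hw)
    · exact h
  · right
    push_neg at hQ
    intro w hw
    refine ⟨fun _ => ?_, (hQ w hw).1⟩
    rcases hSMD.adj v w (fun he => (hQ w hw).2 he.symm) with h | h
    · exact h
    · exact absurd h (hQ w hw).1


end Aux

/-- In a strongly connected semicomplete multipartite digraph, every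
maximum G-cycle (a longest G-cycle with the maximum number of vertices among longest
G-cycles) is spanning. -/
theorem stmt2 {V K : Type} [Fintype V] {A : V → V → Prop} {part : V → K}
    (hSMD : IsSMD A part) (hstrong : IsStrong A)
    (C : GCycle A part)
    (hlongest : ∀ C' : GCycle A part, C'.len ≤ C.len)
    (hmax : ∀ C' : GCycle A part, C'.len = C.len →
      C'.toGPath.verts.length ≤ C.toGPath.verts.length) :
    ∀ v : V, v ∈ C.toGPath.verts := by
  by_contra hcon
  push_neg at hcon
  obtain ⟨v0, hv0⟩ := hcon
  have hsing : ∀ z, z ∉ C.toGPath.verts → C.InSingular z ∨ C.OutSingular z :=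
    fun z hz => singular_dichotomy hSMD C hlongest hmax hz
  have hc0 : C.toGPath.verts.head C.toGPath.ne ∈ C.toGPath.verts := List.head_mem _
  by_cases hOut : ∃ z, z ∉ C.toGPath.verts ∧ C.OutSingular z
  · obtain ⟨z0, hz0, hz0O⟩ := hOut
    have hclos : ∀ x z, A x z → (z ∉ C.toGPath.verts ∧ C.OutSingular z) →
        (x ∉ C.toGPath.verts ∧ C.OutSingular x) := by
      rintro x z hAxz ⟨hzn, hzO⟩
      have hxn : x ∉ C.toGPath.verts := fun hx => (hzO x hx).2 hAxz
      refine ⟨hxn, ?_⟩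
      rcases hsing x hxn with hIn | hOutx
      · exfalso
        have hgl : C.toGPath.verts.getLast C.toGPath.ne ∈ C.toGPath.verts :=
          List.getLast_mem _
        have hxz : x ≠ z := by
          rintro rfl
          exact hSMD.noInside x x rfl hAxz
        refine no_insert2 hSMD C hlongest hmax (consec_last_head C) hxn hzn hxz hAxz ?_ ?_
        · by_cases hp : part (C.toGPath.verts.getLast C.toGPath.ne) = part x
          · exact Or.inr hp
          · exact Or.inl ((hIn _ hgl).1 (fun he => hp he.symm))
        · by_cases hp : part z = part (C.toGPath.verts.head C.toGPath.ne)
          · exact Or.inr hp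
          · exact Or.inl ((hzO _ hc0).1 hp)
      · exact hOutx
    have key : ∀ z, Relation.ReflTransGen A (C.toGPath.verts.head C.toGPath.ne) z →
        ¬ (z ∉ C.toGPath.verts ∧ C.OutSingular z) := by
      intro z hpath
      induction hpath with
      | refl => exact fun hh => hh.1 hc0
      | tail hp hA ih => exact fun hh => ih (hclos _ _ hA hh)
    exact key z0 (hstrong _ z0) ⟨hz0, hz0O⟩
  · push_neg at hOut
    have hclos : ∀ x z, A x z → x ∉ C.toGPath.verts → z ∉ C.toGPath.verts := by
      intro x z hAxz hx hz
      rcases hsing x hx with hIn | hO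
      · exact (hIn z hz).2 hAxz
      · exact hOut x hx hO
    have key : ∀ z, Relation.ReflTransGen A v0 z → z ∉ C.toGPath.verts := by
      intro z hp
      induction hp with
      | refl => exact hv0
      | tail hp hA ih => exact hclos _ _ hA ih
    exact key _ (hstrong v0 (C.toGPath.verts.head C.toGPath.ne)) hc0
end

section
/- Let D be a semicomplete multipartite digraph, P^g a G-path in D, and C^g a G-cycle in D - V(P^g). Then D contains a G-path Q^g with V(Q^g) = V(P^g) ∪ V(C^g) and ℓ(Q^g) >= ℓ(P^g) + ℓ(C^g). -/
open Classical

universe u v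

variable {V : Type u} {K : Type v} {A : V → V → Prop} {part : V → K}

/-! ### Auxiliary infrastructure for the proof of `stmt5` -/

namespace Stmt5
section
variable {V K : Type} (A : V → V → Prop) (part : V → K)

/-- The chain relation of a G-path. -/
abbrev Rel (a b : V) : Prop := A a b ∨ part a = part b

/-- Arc weight: 1 if `A a b`, else 0. -/
noncomputable def wt (a b : V) : ℕ := if A a b then 1 else 0

/-- Number of arcs among consecutive pairs of a list. -/
noncomputable def lenL (l : List V) : ℕ :=
  (l.zip l.tail).countP fun q => decide (A q.1 q.2)

/-- Number of arcs among cyclically-consecutive pairs of a list. -/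
noncomputable def cycLen : List V → ℕ
  | [] => 0
  | a :: l => lenL A (a :: l) + wt A ((a :: l).getLastD a) a

variable {A part}

lemma wt_le_one (a b : V) : wt A a b ≤ 1 := by
  unfold wt; split <;> omega

lemma wt_of_arc {a b : V} (h : A a b) : wt A a b = 1 := by
  unfold wt; simp [h]

lemma wt_of_not_arc {a b : V} (h : ¬ A a b) : wt A a b = 0 := by
  unfold wt; simp [h]

lemma lenL_nil : lenL A ([] : List V) = 0 := rfl

lemma lenL_single (a : V) : lenL A [a] = 0 := rfl

lemma lenL_cons₂ (a b : V) (l : List V) :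
    lenL A (a :: b :: l) = wt A a b + lenL A (b :: l) := by
  unfold lenL wt
  rw [show (a :: b :: l).tail = b :: l from rfl, List.zip_cons_cons, List.countP_cons]
  split <;> simp_all [Nat.add_comm]

lemma headD_eq (a d d' : V) (l : List V) : (a :: l).headD d = (a :: l).headD d' := rfl

lemma getLastD_eq (a d d' : V) (l : List V) :
    (a :: l).getLastD d = (a :: l).getLastD d' := by
  rw [List.getLastD_eq_getLast?, List.getLastD_eq_getLast?,
    List.getLast?_eq_getLast (List.cons_ne_nil a l)]
  rfl

lemma getLastD_mem {l : List V} (h : l ≠ []) (d : V) : l.getLastD d ∈ l := by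
  rw [List.getLastD_eq_getLast?, List.getLast?_eq_getLast h]
  exact List.getLast_mem h

lemma headD_mem {l : List V} (h : l ≠ []) (d : V) : l.headD d ∈ l := by
  cases l with
  | nil => exact absurd rfl h
  | cons a t => exact List.mem_cons_self

lemma headD_append {l₁ l₂ : List V} (h : l₁ ≠ []) (d : V) :
    (l₁ ++ l₂).headD d = l₁.headD d := by
  cases l₁ with
  | nil => exact absurd rfl h
  | cons a t => rfl

lemma getLastD_append {l₁ l₂ : List V} (h : l₂ ≠ []) (d : V) :
    (l₁ ++ l₂).getLastD d = l₂.getLastD d := by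
  rw [List.getLastD_eq_getLast?, List.getLastD_eq_getLast?, List.getLast?_append]
  cases l₂ with
  | nil => exact absurd rfl h
  | cons a t => rw [List.getLast?_eq_getLast (List.cons_ne_nil a t)]; rfl

lemma lenL_append {l₁ l₂ : List V} (h₁ : l₁ ≠ []) (h₂ : l₂ ≠ []) (d : V) :
    lenL A (l₁ ++ l₂) = lenL A l₁ + wt A (l₁.getLastD d) (l₂.headD d) + lenL A l₂ := by
  induction l₁ with
  | nil => exact absurd rfl h₁
  | cons a t ih =>
    cases t with
    | nil =>
      cases l₂ with
      | nil => exact absurd rfl h₂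
      | cons b t₂ => simp [lenL_cons₂, lenL_single, List.getLastD]
    | cons a' t' =>
      have : (a :: a' :: t') ++ l₂ = a :: ((a' :: t') ++ l₂) := rfl
      rw [this]
      have hne : (a' :: t') ++ l₂ ≠ [] := by simp
      cases l₂ with
      | nil => exact absurd rfl h₂
      | cons b t₂ =>
        rw [show (a' :: t') ++ b :: t₂ = a' :: (t' ++ b :: t₂) from rfl, lenL_cons₂,
          ← show (a' :: t') ++ b :: t₂ = a' :: (t' ++ b :: t₂) from rfl,
          ih (by simp), lenL_cons₂]
        have hgl : (a :: a' :: t').getLastD d = (a' :: t').getLastD d := by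
          rw [List.getLastD_cons]
          exact getLastD_eq a' a d t'
        rw [hgl]
        omega

end
end Stmt5

namespace Stmt5
section
variable {V K : Type} {A : V → V → Prop} {part : V → K}

lemma cycLen_eq {c : List V} (h : c ≠ []) (d : V) :
    cycLen A c = lenL A c + wt A (c.getLastD d) (c.headD d) := by
  cases c with
  | nil => exact absurd rfl h
  | cons a t =>
    unfold cycLen
    rw [getLastD_eq a d a t]
    rfl

/-- countP of zip with "rotated by one" list. -/
lemma countZipRot (a x : V) (t : List V) :
    (((a :: t).zip (t ++ [x])).countP fun q => decide (A q.1 q.2)) =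
      lenL A (a :: t) + wt A ((a :: t).getLastD x) x := by
  induction t generalizing a with
  | nil =>
    unfold lenL wt
    simp only [List.nil_append, List.zip_cons_cons, List.zip_nil_right, List.zip_nil_left,
      List.countP_cons, List.countP_nil, List.getLastD_cons, List.getLastD_nil, List.tail_cons]
    split <;> simp_all
  | cons b t' ih =>
    rw [show (b :: t') ++ [x] = b :: (t' ++ [x]) from rfl, List.zip_cons_cons,
      List.countP_cons, ih b, lenL_cons₂]
    have h1 : (a :: b :: t').getLastD x = (b :: t').getLastD x := by
      rw [List.getLastD_cons]
      exact getLastD_eq b a x t'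
    rw [h1]
    unfold wt
    split <;> simp_all <;> omega

/-- `GCycle.len` in terms of `cycLen`. -/
lemma gcycle_len (C : GCycle A part) : C.len = cycLen A C.toGPath.verts := by
  rcases hc : C.toGPath.verts with _ | ⟨a, t⟩
  · exact absurd hc C.toGPath.ne
  · show ((C.toGPath.verts.zip (C.toGPath.verts.rotate 1)).countP fun q => decide (A q.1 q.2)) = _
    rw [hc, show (1:ℕ) = 0 + 1 from rfl, List.rotate_cons_succ, List.rotate_zero, countZipRot]
    rfl

end
end Stmt5

namespace Stmt5
section
variable {V K : Type} {A : V → V → Prop} {part : V → K}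

lemma chain_glue {R : V → V → Prop} {l₁ l₂ : List V} (d : V)
    (h₁ : List.Chain' R l₁) (h₂ : List.Chain' R l₂)
    (hne₁ : l₁ ≠ []) (hne₂ : l₂ ≠ [])
    (hj : R (l₁.getLastD d) (l₂.headD d)) : List.Chain' R (l₁ ++ l₂) := by
  change List.IsChain R (l₁ ++ l₂)
  rw [List.isChain_append]
  refine ⟨h₁, h₂, ?_⟩
  intro x hx y hy
  rw [List.getLast?_eq_getLast hne₁] at hx
  rw [List.head?_eq_head hne₂] at hy
  have hx' : x = l₁.getLastD d := by
    rw [List.getLastD_eq_getLast?, List.getLast?_eq_getLast hne₁]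
    simpa using hx.symm
  have hy' : y = l₂.headD d := by
    rw [List.headD_eq_head?, List.head?_eq_head hne₂]
    simpa using hy.symm
  rw [hx', hy']; exact hj

lemma chain_split {R : V → V → Prop} {l₁ l₂ : List V} (d : V)
    (h : List.Chain' R (l₁ ++ l₂)) :
    List.Chain' R l₁ ∧ List.Chain' R l₂ ∧
      (l₁ ≠ [] → l₂ ≠ [] → R (l₁.getLastD d) (l₂.headD d)) := by
  change List.IsChain R (l₁ ++ l₂) at h
  rw [List.isChain_append] at h
  refine ⟨h.1, h.2.1, fun hne₁ hne₂ => ?_⟩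
  apply h.2.2
  · rw [List.getLast?_eq_getLast hne₁, List.getLastD_eq_getLast?,
      List.getLast?_eq_getLast hne₁]; rfl
  · rw [List.head?_eq_head hne₂, List.headD_eq_head?, List.head?_eq_head hne₂]; rfl

/-- `c'` is a rotation of `c`. -/
def Rot (c c' : List V) : Prop := ∃ c₁ c₂ : List V, c = c₁ ++ c₂ ∧ c' = c₂ ++ c₁

lemma rot_refl (c : List V) : Rot c c := ⟨[], c, by simp, by simp⟩

lemma rot_trans {c c' c'' : List V} (h : Rot c c') (h' : Rot c' c'') : Rot c c'' := by
  obtain ⟨c₁, c₂, rfl, rfl⟩ := h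
  obtain ⟨s₁, s₂, hs, rfl⟩ := h'
  rcases List.append_eq_append_iff.mp hs.symm with ⟨a, ha₁, ha₂⟩ | ⟨a, ha₁, ha₂⟩
  · exact ⟨c₁ ++ s₁, a, by rw [ha₁, List.append_assoc], by rw [ha₂, List.append_assoc]⟩
  · exact ⟨a, s₂ ++ c₂, by rw [ha₂, List.append_assoc], by rw [ha₁, List.append_assoc]⟩

lemma rot_perm {c c' : List V} (h : Rot c c') : c.Perm c' := by
  obtain ⟨c₁, c₂, rfl, rfl⟩ := h
  exact List.perm_append_comm

lemma rot_of_mem {c : List V} {x : V} (h : x ∈ c) :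
    ∃ c', Rot c c' ∧ ∀ d, c'.headD d = x := by
  obtain ⟨s, t, rfl⟩ := List.append_of_mem h
  exact ⟨x :: t ++ s, ⟨s, x :: t, rfl, rfl⟩, fun d => by rw [headD_append (by simp) d]; rfl⟩

lemma cycLen_rot {c c' : List V} (h : Rot c c') : cycLen A c' = cycLen A c := by
  obtain ⟨c₁, c₂, rfl, rfl⟩ := h
  rcases eq_or_ne c₁ [] with rfl | h₁
  · simp
  rcases eq_or_ne c₂ [] with rfl | h₂
  · simp
  have hne : c₁ ++ c₂ ≠ [] := by simp [h₁]
  have hne' : c₂ ++ c₁ ≠ [] := by simp [h₂]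
  obtain ⟨a, t, rfl⟩ := List.exists_cons_of_ne_nil h₁
  rw [cycLen_eq hne a, cycLen_eq hne' a, lenL_append h₁ h₂ a, lenL_append h₂ h₁ a,
    getLastD_append h₂ a, getLastD_append h₁ a, headD_append h₁ a, headD_append h₂ a]
  omega

/-- Rotation of a cyclic chain is a cyclic chain. -/
lemma rot_cyc_chain {c c' : List V} {R : V → V → Prop} (d : V) (h : Rot c c')
    (hch : List.Chain' R c) (hcl : c ≠ [] → R (c.getLastD d) (c.headD d)) :
    List.Chain' R c' ∧ (c' ≠ [] → R (c'.getLastD d) (c'.headD d)) := by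
  obtain ⟨c₁, c₂, rfl, rfl⟩ := h
  rcases eq_or_ne c₁ [] with rfl | h₁
  · simp only [List.nil_append, List.append_nil] at hch hcl ⊢
    exact ⟨hch, hcl⟩
  rcases eq_or_ne c₂ [] with rfl | h₂
  · simp only [List.nil_append, List.append_nil] at hch hcl ⊢
    exact ⟨hch, hcl⟩
  have hne : c₁ ++ c₂ ≠ [] := by simp [h₁]
  obtain ⟨hch₁, hch₂, hj⟩ := chain_split d hch
  have hcl' := hcl hne
  rw [getLastD_append h₂ d, headD_append h₁ d] at hcl'
  constructor
  · exact chain_glue d hch₂ hch₁ h₂ h₁ hcl'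
  · intro _
    rw [getLastD_append h₁ d, headD_append h₂ d]
    exact hj h₁ h₂

end
end Stmt5

namespace Stmt5
section
variable {V K : Type} {A : V → V → Prop} {part : V → K}

lemma getLastD_cons' {l : List V} (h : l ≠ []) (a d : V) :
    (a :: l).getLastD d = l.getLastD d := by
  obtain ⟨b, t, rfl⟩ := List.exists_cons_of_ne_nil h
  rw [List.getLastD_cons]
  exact getLastD_eq b a d t

/-- All the fixed data for the merging argument. -/
structure Ctx (A : V → V → Prop) (part : V → K) where
  smd : IsSMD A part
  p : List V
  c : List V
  hpne : p ≠ []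
  hpnd : p.Nodup
  hpch : p.Chain' (Rel A part)
  hcne : c ≠ []
  hcnd : c.Nodup
  hcch : c.Chain' (Rel A part)
  hccl : ∀ d, Rel A part (c.getLastD d) (c.headD d)
  hdisj : ∀ x ∈ p, x ∉ c
  hno : ¬ ∃ Q : GPath A part, (∀ z, z ∈ Q.verts ↔ z ∈ p ∨ z ∈ c) ∧
          lenL A p + cycLen A c ≤ lenL A Q.verts

lemma Ctx.wt_same (S : Ctx A part) {a b : V} (h : part a = part b) : wt A a b = 0 :=
  wt_of_not_arc (IsSMD.noInside S.smd _ _ h)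

variable (S : Ctx A part)

lemma Ctx.build (L : List V) (hperm : L.Perm (S.p ++ S.c))
    (hch : L.Chain' (Rel A part)) (hlen : lenL A S.p + cycLen A S.c ≤ lenL A L) : False := by
  apply S.hno
  have hLne : L ≠ [] := by
    intro h
    have h0 := hperm.length_eq
    rw [h, List.length_append] at h0
    simp only [List.length_nil] at h0
    exact S.hpne (List.length_eq_zero_iff.mp (by omega))
  have hnd : L.Nodup := by
    apply hperm.symm.nodup
    exact List.nodup_append'.mpr ⟨S.hpnd, S.hcnd, S.hdisj⟩
  exact ⟨⟨L, hLne, hnd, hch⟩, fun z => (hperm.mem_iff).trans List.mem_append, hlen⟩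

lemma Ctx.rotFacts {c' : List V} (h : Rot S.c c') :
    c' ≠ [] ∧ (∀ z, z ∈ c' ↔ z ∈ S.c) ∧ c'.Chain' (Rel A part) ∧
      (∀ d, Rel A part (c'.getLastD d) (c'.headD d)) ∧ cycLen A c' = cycLen A S.c := by
  have hperm := rot_perm h
  have hne : c' ≠ [] := by
    intro hh
    have h0 := hperm.length_eq
    rw [hh] at h0
    simp only [List.length_nil] at h0
    exact S.hcne (List.length_eq_zero_iff.mp (by omega))
  refine ⟨hne, fun z => hperm.mem_iff.symm, ?_, ?_, cycLen_rot h⟩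
  · exact (rot_cyc_chain (S.c.getLast S.hcne) h S.hcch fun _ => S.hccl _).1
  · intro d
    exact (rot_cyc_chain d h S.hcch fun _ => S.hccl _).2 hne

/-- Construction: append a rotation of the cycle after the path. -/
lemma Ctx.conApp (d : V) {c' : List V} (hrot : Rot S.c c')
    (hj : Rel A part (S.p.getLastD d) (c'.headD d))
    (hw : wt A (c'.getLastD d) (c'.headD d) ≤ wt A (S.p.getLastD d) (c'.headD d)) : False := by
  obtain ⟨hne, hmem, hch, hcl, hclen⟩ := S.rotFacts hrot
  apply S.build (S.p ++ c')
  · exact List.Perm.append_left S.p (rot_perm hrot).symm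
  · exact chain_glue d S.hpch hch S.hpne hne hj
  · rw [lenL_append S.hpne hne d, ← hclen, cycLen_eq hne d]
    omega

/-- Construction: prepend a rotation of the cycle before the path. -/
lemma Ctx.conPre (d : V) {c' : List V} (hrot : Rot S.c c')
    (hj : Rel A part (c'.getLastD d) (S.p.headD d))
    (hw : wt A (c'.getLastD d) (c'.headD d) ≤ wt A (c'.getLastD d) (S.p.headD d)) : False := by
  obtain ⟨hne, hmem, hch, hcl, hclen⟩ := S.rotFacts hrot
  apply S.build (c' ++ S.p)
  · exact List.perm_append_comm.trans (List.Perm.append_left S.p (rot_perm hrot).symm)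
  · exact chain_glue d hch S.hpch hne S.hpne hj
  · rw [lenL_append hne S.hpne d, ← hclen, cycLen_eq hne d]
    omega

/-- Construction: insert a rotation of the cycle into a gap of the path. -/
lemma Ctx.conIns (d : V) {p₁ p₂ c' : List V} (hp : S.p = p₁ ++ p₂)
    (h₁ : p₁ ≠ []) (h₂ : p₂ ≠ []) (hrot : Rot S.c c')
    (hj₁ : Rel A part (p₁.getLastD d) (c'.headD d))
    (hj₂ : Rel A part (c'.getLastD d) (p₂.headD d))
    (hw : wt A (p₁.getLastD d) (p₂.headD d) + wt A (c'.getLastD d) (c'.headD d) ≤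
      wt A (p₁.getLastD d) (c'.headD d) + wt A (c'.getLastD d) (p₂.headD d)) : False := by
  obtain ⟨hne, hmem, hch, hcl, hclen⟩ := S.rotFacts hrot
  obtain ⟨hchp₁, hchp₂, hjp⟩ := chain_split d (hp ▸ S.hpch)
  apply S.build (p₁ ++ (c' ++ p₂))
  · have hpm : (p₁ ++ (c' ++ p₂)).Perm (p₁ ++ (p₂ ++ S.c)) :=
      List.Perm.append_left _ (List.perm_append_comm.trans
        (List.Perm.append_left _ (rot_perm hrot).symm))
    simpa [hp, List.append_assoc] using hpm
  · refine chain_glue d hchp₁ ?_ h₁ (fun hh => hne (List.append_eq_nil_iff.mp hh).1) ?_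
    · exact chain_glue d hch hchp₂ hne h₂ hj₂
    · rw [headD_append hne d]; exact hj₁
  · rw [lenL_append h₁ (fun hh => hne (List.append_eq_nil_iff.mp hh).1) d, lenL_append hne h₂ d,
      headD_append hne d, hp, lenL_append h₁ h₂ d, ← hclen, cycLen_eq hne d]
    omega

/-- Construction: two segments of the cycle around one path vertex. -/
lemma Ctx.conA2 (d : V) {p₁ p₂ s₁ s₂ : List V} {x : V} (hp : S.p = p₁ ++ x :: p₂)
    (h₁ : p₁ ≠ []) (h₂ : p₂ ≠ []) (hrot : Rot S.c (s₁ ++ s₂))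
    (hs₁ : s₁ ≠ []) (hs₂ : s₂ ≠ [])
    (hj₁ : Rel A part (p₁.getLastD d) (s₁.headD d))
    (hj₂ : Rel A part (s₁.getLastD d) x)
    (hj₃ : Rel A part x (s₂.headD d))
    (hj₄ : Rel A part (s₂.getLastD d) (p₂.headD d))
    (hw : wt A (p₁.getLastD d) x + wt A x (p₂.headD d) +
        wt A (s₁.getLastD d) (s₂.headD d) + wt A (s₂.getLastD d) (s₁.headD d) ≤
      wt A (p₁.getLastD d) (s₁.headD d) + wt A (s₁.getLastD d) x +
        wt A x (s₂.headD d) + wt A (s₂.getLastD d) (p₂.headD d)) : False := by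
  obtain ⟨hne, hmem, hch, hcl, hclen⟩ := S.rotFacts hrot
  obtain ⟨hchs₁, hchs₂, hjs⟩ := chain_split d hch
  obtain ⟨hchp₁, hchrest, hjp⟩ := chain_split d (hp ▸ S.hpch)
  obtain ⟨hchx, hchp₂, hjxp⟩ := chain_split d (l₁ := [x]) hchrest
  apply S.build (p₁ ++ (s₁ ++ ((x :: s₂) ++ p₂)))
  · have hcperm : (s₁ ++ s₂).Perm S.c := (rot_perm hrot).symm
    have : ∀ a : V, (p₁ ++ (s₁ ++ ((x :: s₂) ++ p₂))).count a = (S.p ++ S.c).count a := by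
      intro a
      have h1 := hcperm.count_eq a
      rw [hp]
      simp only [List.count_append, List.count_cons] at h1 ⊢
      omega
    exact List.perm_iff_count.mpr this
  · refine chain_glue d hchp₁ ?_ h₁ (fun hh => hs₁ (List.append_eq_nil_iff.mp hh).1) ?_
    · refine chain_glue d hchs₁ ?_ hs₁ (by simp) ?_
      · refine chain_glue d ?_ hchp₂ (by simp) h₂ ?_
        · exact chain_glue d hchx hchs₂ (by simp) hs₂ (by simpa using hj₃)
        · rw [getLastD_cons' hs₂ x d]; exact hj₄
      · rw [headD_append (l₁ := x :: s₂) (by simp) d]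
        exact hj₂
    · rw [headD_append hs₁ d]
      exact hj₁
  · have e1 : lenL A (p₁ ++ (s₁ ++ ((x :: s₂) ++ p₂))) =
        lenL A p₁ + wt A (p₁.getLastD d) (s₁.headD d) + lenL A s₁ +
          wt A (s₁.getLastD d) x + (wt A x (s₂.headD d) + lenL A s₂) +
          wt A (s₂.getLastD d) (p₂.headD d) + lenL A p₂ := by
      rw [lenL_append h₁ (fun hh => hs₁ (List.append_eq_nil_iff.mp hh).1) d,
        headD_append hs₁ d,
        lenL_append hs₁ (by simp : (x :: s₂) ++ p₂ ≠ []) d,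
        headD_append (l₁ := x :: s₂) (by simp) d,
        lenL_append (l₁ := x :: s₂) (by simp) h₂ d,
        getLastD_cons' hs₂ x d,
        show ((x :: s₂).headD d) = x from rfl,
        show (x :: s₂) = [x] ++ s₂ from rfl,
        lenL_append (l₁ := [x]) (by simp) hs₂ d,
        show ([x].getLastD d) = x from rfl, lenL_single]
      omega
    have e2 : lenL A S.p = lenL A p₁ + wt A (p₁.getLastD d) x + (wt A x (p₂.headD d) + lenL A p₂) := by
      rw [hp, lenL_append h₁ (by simp : x :: p₂ ≠ []) d,
        show ((x :: p₂).headD d) = x from rfl,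
        show (x :: p₂) = [x] ++ p₂ from rfl, lenL_append (l₁ := [x]) (by simp) h₂ d,
        show ([x].getLastD d) = x from rfl, lenL_single]
      omega
    have e3 : cycLen A S.c = lenL A s₁ + wt A (s₁.getLastD d) (s₂.headD d) + lenL A s₂ +
        wt A (s₂.getLastD d) (s₁.headD d) := by
      rw [← hclen, cycLen_eq hne d, lenL_append hs₁ hs₂ d, getLastD_append hs₂ d,
        headD_append hs₁ d]
    rw [e1, e2, e3]
    omega

end
end Stmt5

namespace Stmt5
section
variable {V K : Type} {A : V → V → Prop} {part : V → K}

lemma Ctx.false (S : Ctx A part) : False := by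
  classical
  obtain ⟨x₀, hx₀⟩ : ∃ a : V, a ∈ S.p := List.exists_mem_of_ne_nil S.p S.hpne
  have adj : ∀ a b : V, part a ≠ part b → A a b ∨ A b a := S.smd.adj
  -- STEP 1 : the terminal vertex has an out-neighbour on the cycle
  by_cases h1 : ∃ e ∈ S.c, A (S.p.getLastD x₀) e
  · obtain ⟨e, hec, hAe⟩ := h1
    obtain ⟨c', hrot, hhd⟩ := rot_of_mem hec
    exact S.conApp x₀ hrot (by rw [hhd]; exact Or.inl hAe)
      (by rw [hhd, wt_of_arc hAe]; exact wt_le_one (A := A) _ _)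
  push_neg at h1
  -- STEP 2 : a same-part append
  by_cases h2 : ∃ c', Rot S.c c' ∧ part (c'.headD x₀) = part (S.p.getLastD x₀) ∧
      part (c'.getLastD x₀) = part (c'.headD x₀)
  · obtain ⟨c', hrot, hp1, hp2⟩ := h2
    exact S.conApp x₀ hrot (Or.inr hp1.symm) (by rw [S.wt_same hp2]; exact Nat.zero_le _)
  push_neg at h2
  -- STEP 3 : the initial vertex has an in-neighbour on the cycle
  by_cases h3 : ∃ e ∈ S.c, A e (S.p.headD x₀)
  · obtain ⟨e, hec, hAe⟩ := h3
    obtain ⟨s, t, hst⟩ := List.append_of_mem hec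
    have hrot : Rot S.c (t ++ (s ++ [e])) := ⟨s ++ [e], t, by rw [hst, List.append_assoc]; rfl, rfl⟩
    have hgl : (t ++ (s ++ [e])).getLastD x₀ = e := by
      rw [getLastD_append (by simp) x₀, List.getLastD_concat]
    exact S.conPre x₀ hrot (by rw [hgl]; exact Or.inl hAe)
      (by rw [hgl, wt_of_arc hAe]; exact wt_le_one (A := A) _ _)
  push_neg at h3
  -- STEP 4 : a same-part prepend
  by_cases h4 : ∃ c', Rot S.c c' ∧ part (c'.getLastD x₀) = part (S.p.headD x₀) ∧
      part (c'.getLastD x₀) = part (c'.headD x₀)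
  · obtain ⟨c', hrot, hp1, hp2⟩ := h4
    exact S.conPre x₀ hrot (Or.inr hp1) (by rw [S.wt_same hp2]; exact Nat.zero_le _)
  push_neg at h4
  -- the initial vertex has an out-neighbour on the cycle
  have hvout : ∃ e ∈ S.c, A (S.p.headD x₀) e := by
    have hcv : ∃ e ∈ S.c, part e ≠ part (S.p.headD x₀) := by
      by_contra hall
      push_neg at hall
      exact (h4 S.c (rot_refl _) (hall _ (getLastD_mem S.hcne x₀)))
        ((hall _ (getLastD_mem S.hcne x₀)).trans (hall _ (headD_mem S.hcne x₀)).symm)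
    obtain ⟨e, hec, hpe⟩ := hcv
    rcases adj (S.p.headD x₀) e (fun hh => hpe hh.symm) with hA | hA
    · exact ⟨e, hec, hA⟩
    · exact absurd hA (h3 e hec)
  -- the path has at least two vertices
  have hvu : S.p.headD x₀ ≠ S.p.getLastD x₀ := by
    obtain ⟨e, hec, hA⟩ := hvout
    intro hh
    rw [hh] at hA
    exact h1 e hec hA
  have hm1 : 1 ≤ S.p.length := List.length_pos_iff.mpr S.hpne
  have hm2 : 2 ≤ S.p.length := by
    by_contra hlt
    push_neg at hlt
    have hone : S.p.length = 1 := by omega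
    obtain ⟨a, ha⟩ := List.length_eq_one_iff.mp hone
    apply hvu
    rw [ha]
    rfl
  have hgetD_head : S.p.getD 0 x₀ = S.p.headD x₀ := by
    cases hp : S.p with
    | nil => exact absurd hp S.hpne
    | cons a t => rfl
  have hgetD_last : S.p.getD (S.p.length - 1) x₀ = S.p.getLastD x₀ := by
    rw [List.getD_eq_getElem _ _ (by omega), List.getLastD_eq_getLast?,
      List.getLast?_eq_getLast S.hpne, Option.getD_some, List.getLast_eq_getElem]
  -- THE MAIN DESCENDING INDUCTION
  have key : ∀ r : ℕ, (∃ e ∈ S.c, A (S.p.getD r x₀) e) → r + 1 ≤ S.p.length - 1 →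
      (¬ ∃ e ∈ S.c, A (S.p.getD (r+1) x₀) e) → False := by
    intro r
    induction r using Nat.strong_induction_on with
    | _ r IH =>
      intro hOutr hrm hOutr1
      push_neg at hOutr1
      set x := S.p.getD r x₀ with hxdef
      set w := S.p.getD (r+1) x₀ with hwdef
      have hrltm : r + 1 < S.p.length := by omega
      -- w is dominated (or same part)
      have dom_w : ∀ e ∈ S.c, part e ≠ part w → A e w := by
        intro e he hne'
        rcases adj w e (Ne.symm hne') with hA | hA
        · exact absurd hA (hOutr1 e he)
        · exact hA
      -- decomposition of the path at the gap (x, w)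
      have htake : S.p.take (r+1) = S.p.take r ++ [S.p[r]] := by
        rw [List.take_succ, List.getElem?_eq_getElem (show r < S.p.length by omega)]
        rfl
      have hdrop : S.p.drop (r+1) = S.p[r+1] :: S.p.drop (r+2) := by
        rw [List.drop_eq_getElem_cons hrltm]
      have hp12 : S.p = S.p.take (r+1) ++ S.p.drop (r+1) := (List.take_append_drop _ _).symm
      have hp₁ne : S.p.take (r+1) ≠ [] := List.ne_nil_of_length_pos (by rw [List.length_take]; omega)
      have hp₂ne : S.p.drop (r+1) ≠ [] := List.ne_nil_of_length_pos (by rw [List.length_drop]; omega)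
      have hgDp₁ : (S.p.take (r+1)).getLastD x₀ = x := by
        rw [htake, List.getLastD_concat, hxdef, List.getD_eq_getElem _ _ (by omega)]
      have hhDp₂ : (S.p.drop (r+1)).headD x₀ = w := by
        rw [hdrop, hwdef, List.getD_eq_getElem _ _ hrltm]
        rfl
      -- residual facts for every rotation entered by x
      have Hres : ∀ c', Rot S.c c' → A x (c'.headD x₀) →
          part (c'.getLastD x₀) = part w ∧ part x ≠ part w ∧
            part (c'.getLastD x₀) ≠ part (c'.headD x₀) := by
        intro c' hrot hAx
        obtain ⟨hne, hmem, _, _, _⟩ := S.rotFacts hrot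
        have hgl_mem : c'.getLastD x₀ ∈ S.c := (hmem _).mp (getLastD_mem hne x₀)
        by_cases hq1 : part (c'.getLastD x₀) = part w
        · by_cases hq2 : part x = part w
          · exact (S.conIns x₀ hp12 hp₁ne hp₂ne hrot
              (by rw [hgDp₁]; exact Or.inl hAx)
              (by rw [hhDp₂]; exact Or.inr hq1)
              (by rw [hgDp₁, hhDp₂, S.wt_same hq2, wt_of_arc hAx]
                  have h5 := wt_le_one (A := A) (c'.getLastD x₀) (c'.headD x₀)
                  omega)).elim
          · by_cases hq3 : part (c'.getLastD x₀) = part (c'.headD x₀)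
            · exact (S.conIns x₀ hp12 hp₁ne hp₂ne hrot
                (by rw [hgDp₁]; exact Or.inl hAx)
                (by rw [hhDp₂]; exact Or.inr hq1)
                (by rw [hgDp₁, hhDp₂, S.wt_same hq3, wt_of_arc hAx]
                    have h5 := wt_le_one (A := A) x w
                    omega)).elim
            · exact ⟨hq1, hq2, hq3⟩
        · have hAgw : A (c'.getLastD x₀) w := dom_w _ hgl_mem hq1
          exact (S.conIns x₀ hp12 hp₁ne hp₂ne hrot
            (by rw [hgDp₁]; exact Or.inl hAx)
            (by rw [hhDp₂]; exact Or.inl hAgw)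
            (by rw [hgDp₁, hhDp₂, wt_of_arc hAx, wt_of_arc hAgw]
                have h5 := wt_le_one (A := A) x w
                have h6 := wt_le_one (A := A) (c'.getLastD x₀) (c'.headD x₀)
                omega)).elim
      obtain ⟨d₀, hd₀c, hAxd₀⟩ := hOutr
      obtain ⟨c₀, hrot₀, hhd₀⟩ := rot_of_mem hd₀c
      obtain ⟨hc₀ne, hc₀mem, _, _, _⟩ := S.rotFacts hrot₀
      have H₀ := Hres c₀ hrot₀ (by rw [hhd₀]; exact hAxd₀)
      have hxw : part x ≠ part w := H₀.2.1
      -- all cycle vertices in the part of w dominate x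
      have F6 : ∀ z ∈ S.c, part z = part w → A z x := by
        intro z hz hpz
        have hzx : part x ≠ part z := by rw [hpz]; exact hxw
        rcases adj x z hzx with hA | hA
        · obtain ⟨cz, hrotz, hhdz⟩ := rot_of_mem hz
          have Hz := Hres cz hrotz (by rw [hhdz]; exact hA)
          have : part (cz.headD x₀) = part w := by rw [hhdz x₀]; exact hpz
          exact absurd (Hz.1.trans this.symm) Hz.2.2
        · exact hA
      -- the case r = 0 : contradiction with step 3
      rcases Nat.eq_zero_or_pos r with rfl | hrpos
      · have hgl0 : c₀.getLastD x₀ ∈ S.c := (hc₀mem _).mp (getLastD_mem hc₀ne x₀)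
        have hAx0 : A (c₀.getLastD x₀) x := F6 _ hgl0 H₀.1
        rw [hxdef, hgetD_head] at hAx0
        exact h3 _ hgl0 hAx0
      -- now r ≥ 1
      set y := S.p.getD (r-1) x₀ with hydef
      have hrm1 : r - 1 < S.p.length := by omega
      have htaker : S.p.take r = S.p.take (r-1) ++ [S.p[r-1]] := by
        conv_lhs => rw [show r = (r-1) + 1 by omega]
        rw [List.take_succ, List.getElem?_eq_getElem hrm1]
        rfl
      have hdropr : S.p.drop r = S.p[r] :: S.p.drop (r+1) := by
        conv_lhs => rw [show r = (r-1) + 1 by omega]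
        rw [show (r-1) + 1 = r by omega, List.drop_eq_getElem_cons (by omega)]
      have hq12 : S.p = S.p.take r ++ S.p.drop r := (List.take_append_drop _ _).symm
      have hq₁ne : S.p.take r ≠ [] := List.ne_nil_of_length_pos (by rw [List.length_take]; omega)
      have hq₂ne : S.p.drop r ≠ [] := List.ne_nil_of_length_pos (by rw [List.length_drop]; omega)
      have hgDq₁ : (S.p.take r).getLastD x₀ = y := by
        rw [htaker, List.getLastD_concat, hydef, List.getD_eq_getElem _ _ hrm1]
      have hhDq₂ : (S.p.drop r).headD x₀ = x := by
        rw [hdropr, hxdef, List.getD_eq_getElem _ _ (by omega)]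
        rfl
      have hpA : S.p = S.p.take r ++ x :: S.p.drop (r+1) := by
        rw [hxdef, List.getD_eq_getElem _ _ (show r < S.p.length by omega), ← hdropr, ← hq12]
      by_cases hyOut : ∃ e ∈ S.c, A y e
      · obtain ⟨d₁, hd₁c, hAyd₁⟩ := hyOut
        obtain ⟨c₁, hrot₁, hhd₁⟩ := rot_of_mem hd₁c
        obtain ⟨hc₁ne, hc₁mem, _, _, _⟩ := S.rotFacts hrot₁
        have hgl₁mem : c₁.getLastD x₀ ∈ S.c := (hc₁mem _).mp (getLastD_mem hc₁ne x₀)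
        by_cases hW : part (c₁.getLastD x₀) = part w
        · -- Construction C : insert the rotation into the gap (y, x)
          exact S.conIns x₀ hq12 hq₁ne hq₂ne hrot₁
            (by rw [hgDq₁, hhd₁]; exact Or.inl hAyd₁)
            (by rw [hhDq₂]; exact Or.inl (F6 _ hgl₁mem hW))
            (by rw [hgDq₁, hhDq₂, hhd₁, wt_of_arc hAyd₁, wt_of_arc (F6 _ hgl₁mem hW)]
                have h5 := wt_le_one (A := A) y x
                have h6 := wt_le_one (A := A) (c₁.getLastD x₀) d₁
                omega)
        · -- Construction A : two segments around x
          have hnAxd₁ : ¬ A x d₁ := by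
            intro hA
            exact hW (Hres c₁ hrot₁ (by rw [hhd₁]; exact hA)).1
          have hne01 : d₀ ≠ d₁ := fun hh => hnAxd₁ (hh ▸ hAxd₀)
          have hd₀c₁ : d₀ ∈ c₁ := (hc₁mem d₀).mpr hd₀c
          obtain ⟨s₁, t₁, hsplit⟩ := List.append_of_mem hd₀c₁
          have hs₁ne : s₁ ≠ [] := by
            rintro rfl
            apply hne01
            have hh := hhd₁ x₀
            rw [hsplit] at hh
            exact hh
          have hrot_s : Rot S.c (s₁ ++ d₀ :: t₁) := hsplit ▸ hrot₁
          have hrot₂ : Rot S.c ((d₀ :: t₁) ++ s₁) :=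
            rot_trans hrot_s ⟨s₁, d₀ :: t₁, rfl, rfl⟩
          have H₂ := Hres ((d₀ :: t₁) ++ s₁) hrot₂
            (by rw [headD_append (List.cons_ne_nil _ _) x₀]; exact hAxd₀)
          have hgds : ((d₀ :: t₁) ++ s₁).getLastD x₀ = s₁.getLastD x₀ :=
            getLastD_append hs₁ne x₀
          have hpart_s₁ : part (s₁.getLastD x₀) = part w := by rw [← hgds]; exact H₂.1
          have hs₁gl_mem : s₁.getLastD x₀ ∈ S.c := by
            apply (hc₁mem _).mp
            rw [hsplit]
            exact List.mem_append_left _ (getLastD_mem hs₁ne x₀)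
          have hAs₁x : A (s₁.getLastD x₀) x := F6 _ hs₁gl_mem hpart_s₁
          have hgdc₁ : c₁.getLastD x₀ = (d₀ :: t₁).getLastD x₀ := by
            rw [hsplit]
            exact getLastD_append (List.cons_ne_nil _ _) x₀
          have hs₂gl_mem : (d₀ :: t₁).getLastD x₀ ∈ S.c := by
            rw [← hgdc₁]
            exact hgl₁mem
          have hAs₂w : A ((d₀ :: t₁).getLastD x₀) w :=
            dom_w _ hs₂gl_mem (by rw [← hgdc₁]; exact hW)
          have hhds₁ : s₁.headD x₀ = d₁ := by
            have hh := hhd₁ x₀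
            rw [hsplit, headD_append hs₁ne] at hh
            exact hh
          exact S.conA2 x₀ hpA hq₁ne hp₂ne hrot_s hs₁ne (List.cons_ne_nil _ _)
            (by rw [hgDq₁, hhds₁]; exact Or.inl hAyd₁)
            (Or.inl hAs₁x)
            (Or.inl hAxd₀)
            (by rw [hhDp₂]; exact Or.inl hAs₂w)
            (by rw [hgDq₁, hhDp₂, hhds₁, show ((d₀ :: t₁).headD x₀) = d₀ from rfl,
                  wt_of_arc hAyd₁, wt_of_arc hAs₁x, wt_of_arc hAxd₀, wt_of_arc hAs₂w]
                have h5 := wt_le_one (A := A) y x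
                have h6 := wt_le_one (A := A) x w
                have h7 := wt_le_one (A := A) (s₁.getLastD x₀) d₀
                have h8 := wt_le_one (A := A) ((d₀ :: t₁).getLastD x₀) (s₁.headD x₀)
                rw [hhds₁] at h8
                omega)
      · -- y has no out-neighbour on the cycle
        rcases eq_or_lt_of_le (show 1 ≤ r from hrpos) with h1r | h2r
        · -- r = 1 : y = v has an out-neighbour, contradiction
          apply hyOut
          rw [hydef, show r - 1 = 0 by omega, hgetD_head]
          exact hvout
        · -- r ≥ 2 : recurse
          have hOut0 : ∃ e ∈ S.c, A (S.p.getD 0 x₀) e := by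
            rw [hgetD_head]
            exact hvout
          set Ppred : ℕ → Prop := fun s => ∃ e ∈ S.c, A (S.p.getD s x₀) e with hPdef
          set r' := Nat.findGreatest Ppred (r-2) with hr'def
          have hr'le : r' ≤ r - 2 := by rw [hr'def]; exact Nat.findGreatest_le _
          have hOutr' : ∃ e ∈ S.c, A (S.p.getD r' x₀) e :=
            Nat.findGreatest_spec (P := Ppred) (Nat.zero_le _) hOut0
          have hnOut : ¬ ∃ e ∈ S.c, A (S.p.getD (r'+1) x₀) e := by
            rcases le_or_gt (r'+1) (r-2) with hle | hlt
            · have hlt' : Nat.findGreatest Ppred (r-2) < r' + 1 := by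
                rw [← hr'def]; exact Nat.lt_succ_self _
              exact Nat.findGreatest_is_greatest (P := Ppred) hlt' hle
            · have heq : r' + 1 = r - 1 := by omega
              rw [heq]
              exact hyOut
          exact IH r' (by omega) hOutr' (by omega) hnOut
  -- apply the induction to the largest index with an out-neighbour
  have hOut0 : ∃ e ∈ S.c, A (S.p.getD 0 x₀) e := by
    rw [hgetD_head]
    exact hvout
  set Ppred : ℕ → Prop := fun s => ∃ e ∈ S.c, A (S.p.getD s x₀) e with hPdef
  set t := Nat.findGreatest Ppred (S.p.length - 2) with htdef
  have htle : t ≤ S.p.length - 2 := by rw [htdef]; exact Nat.findGreatest_le _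
  have hOutt : ∃ e ∈ S.c, A (S.p.getD t x₀) e :=
    Nat.findGreatest_spec (P := Ppred) (Nat.zero_le _) hOut0
  have hnott : ¬ ∃ e ∈ S.c, A (S.p.getD (t+1) x₀) e := by
    rcases le_or_gt (t+1) (S.p.length - 2) with hle | hlt
    · have hlt' : Nat.findGreatest Ppred (S.p.length - 2) < t + 1 := by
        rw [← htdef]; exact Nat.lt_succ_self _
      exact Nat.findGreatest_is_greatest (P := Ppred) hlt' hle
    · have heq : t + 1 = S.p.length - 1 := by omega
      rw [heq]
      intro ⟨e, hec, hAe⟩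
      rw [hgetD_last] at hAe
      exact h1 e hec hAe
  exact key t hOutt (by omega) hnott

end
end Stmt5
/-- For a G-path `P` and a G-cycle `C` of a semicomplete multipartite
digraph with disjoint vertex sets, there is a G-path `Q` with
`V(Q) = V(P) ∪ V(C)` and `ℓ(Q) ≥ ℓ(P) + ℓ(C)`. -/
theorem stmt5 {V K : Type} {A : V → V → Prop} {part : V → K}
    (hSMD : IsSMD A part) (P : GPath A part) (C : GCycle A part)
    (hdisj : ∀ x ∈ P.verts, x ∉ C.toGPath.verts) :
    ∃ Q : GPath A part,
      (∀ v : V, v ∈ Q.verts ↔ v ∈ P.verts ∨ v ∈ C.toGPath.verts) ∧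
      P.len + C.len ≤ Q.len := by
  by_contra hno
  have hlenP : P.len = Stmt5.lenL A P.verts := rfl
  have hlenC : C.len = Stmt5.cycLen A C.toGPath.verts := Stmt5.gcycle_len C
  have hccl : ∀ d : V, Stmt5.Rel A part (C.toGPath.verts.getLastD d) (C.toGPath.verts.headD d) := by
    intro d
    have hne := C.toGPath.ne
    have h1 : C.toGPath.verts.getLastD d = C.toGPath.verts.getLast hne := by
      rw [List.getLastD_eq_getLast?, List.getLast?_eq_getLast hne]
      rfl
    have h2 : C.toGPath.verts.headD d = C.toGPath.verts.head hne := by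
      rw [List.headD_eq_head?, List.head?_eq_head hne]
      rfl
    rw [h1, h2]
    exact C.close
  exact Stmt5.Ctx.false
    { smd := hSMD
      p := P.verts
      c := C.toGPath.verts
      hpne := P.ne
      hpnd := P.nodup
      hpch := P.chain
      hcne := C.toGPath.ne
      hcnd := C.toGPath.nodup
      hcch := C.toGPath.chain
      hccl := hccl
      hdisj := hdisj
      hno := by
        intro ⟨Q, hmem, hlen⟩
        exact hno ⟨Q, hmem, by rw [hlenP, hlenC]; exact hlen⟩ }
end

section
/- Let D be an extended semicomplete digraph and let C_1^g and C_2^g be vertex-disjoint G-cycles that both contain a vertex from the same partite set V of D. Then D has a G-cycle C^g with V(C^g) = V(C_1^g) ∪ V(C_2^g) and ℓ(C^g) = ℓ(C_1^g) + ℓ(C_2^g). -/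
open Classical

universe u v

variable {V : Type u} {K : Type v} {A : V → V → Prop} {part : V → K}

private lemma getLast_eq_of {α : Type*} {l s : List α} {a : α} (h : l = s ++ [a])
    (hne : l ≠ []) : l.getLast hne = a := by
  subst h; exact List.getLast_append_singleton s

private lemma getLast_congr {α : Type*} {l l' : List α} (h : l = l') (hne : l ≠ [])
    (hne' : l' ≠ []) : l.getLast hne = l'.getLast hne' := by subst h; rfl

private lemma head_congr {α : Type*} {l l' : List α} (h : l = l') (hne : l ≠ [])
    (hne' : l' ≠ []) : l.head hne = l'.head hne' := by subst h; rfl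

private lemma head_eq_of {α : Type*} {l s : List α} {a : α} (h : l = a :: s)
    (hne : l ≠ []) : l.head hne = a := by
  subst h; rfl

private lemma zip_concat {α β : Type*} : ∀ (l : List α) (t : List β) (b : β)
    (hl : l ≠ []), l.length = t.length + 1 →
    l.zip (t ++ [b]) = l.zip t ++ [(l.getLast hl, b)]
  | [], _, _, hl, _ => absurd rfl hl
  | [x], t, b, _, h => by
      obtain rfl : t = [] := List.length_eq_zero_iff.mp (by simpa using h.symm)
      simp
  | x :: y :: l, t, b, hl, h => by
      match t with
      | [] => simp at h
      | c :: t =>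
        simp only [List.cons_append, List.zip_cons_cons,
          List.getLast_cons (List.cons_ne_nil y l)]
        rw [zip_concat (y :: l) t b (List.cons_ne_nil y l) (by simpa using h)]

private lemma cyc_eq {α : Type*} (l : List α) (hl : l ≠ []) :
    l.zip (l.rotate 1) = l.zip l.tail ++ [(l.getLast hl, l.head hl)] := by
  obtain ⟨a, t, rfl⟩ := List.exists_cons_of_ne_nil hl
  rw [show (a :: t).rotate 1 = t ++ [a] by simpa using List.rotate_cons_succ t a 0]
  rw [zip_concat (a :: t) t a hl (by simp)]
  rfl

private lemma inner_append {α : Type*} (l₁ l₂ : List α) (h₁ : l₁ ≠ []) (h₂ : l₂ ≠ []) :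
    (l₁ ++ l₂).zip (l₁ ++ l₂).tail
      = l₁.zip l₁.tail ++ [(l₁.getLast h₁, l₂.head h₂)] ++ l₂.zip l₂.tail := by
  obtain ⟨a, t₁, rfl⟩ := List.exists_cons_of_ne_nil h₁
  obtain ⟨b, t₂, rfl⟩ := List.exists_cons_of_ne_nil h₂
  have ht : ((a :: t₁) ++ (b :: t₂)).tail = (t₁ ++ [b]) ++ t₂ := by simp
  rw [ht, List.zip_append (by simp), zip_concat (a :: t₁) t₁ b (by simp) (by simp)]
  simp

private lemma cyc_rotate_countP {α : Type*} (p : α × α → Bool) (l : List α) (n : ℕ) :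
    (((l.rotate n)).zip ((l.rotate n).rotate 1)).countP p
      = (l.zip (l.rotate 1)).countP p := by
  have h1 : (l.rotate n).rotate 1 = (l.rotate 1).rotate n := by
    rw [List.rotate_rotate, List.rotate_rotate, Nat.add_comm]
  rw [h1]
  rw [show ∀ (l₁ l₂ : List α), l₁.zip l₂ = List.zipWith Prod.mk l₁ l₂ from fun _ _ => rfl]
  rw [← List.zipWith_rotate_distrib _ _ _ _ (by rw [List.length_rotate])]
  exact List.Perm.countP_eq p (List.rotate_perm _ n)

private lemma cycle_swap (C : GCycle A part) (m₁ m₂ : List V)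
    (h : C.toGPath.verts = m₁ ++ m₂) :
    ∃ C' : GCycle A part, C'.toGPath.verts = m₂ ++ m₁ ∧ C'.len = C.len := by
  rcases eq_or_ne m₁ [] with rfl | h₁
  · exact ⟨C, by simpa using h, rfl⟩
  rcases eq_or_ne m₂ [] with rfl | h₂
  · exact ⟨C, by simpa using h, rfl⟩
  have hne : m₂ ++ m₁ ≠ [] := by simp [h₂]
  have hch := C.toGPath.chain
  rw [h, List.Chain', List.isChain_append] at hch
  obtain ⟨hc1, hc2, hlink⟩ := hch
  have hclose := C.close
  have hgl : C.toGPath.verts.getLast C.toGPath.ne = m₂.getLast h₂ :=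
    (getLast_congr h _ (by simp [h₂])).trans (List.getLast_append_of_ne_nil _ h₂)
  have hhd : C.toGPath.verts.head C.toGPath.ne = m₁.head h₁ := by
    obtain ⟨a, t, he⟩ := List.exists_cons_of_ne_nil h₁
    rw [head_eq_of (by rw [h, he]; rfl) C.toGPath.ne, head_eq_of he h₁]
  rw [hgl, hhd] at hclose
  refine ⟨⟨⟨m₂ ++ m₁, hne, ?_, ?_⟩, ?_⟩, rfl, ?_⟩
  · exact List.perm_append_comm.nodup (h ▸ C.toGPath.nodup)
  · refine List.isChain_append.mpr ⟨hc2, hc1, ?_⟩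
    intro u hu v hv
    rw [List.getLast?_eq_getLast h₂] at hu
    rw [List.head?_eq_head h₁] at hv
    obtain rfl : m₂.getLast h₂ = u := by simpa using hu
    obtain rfl : m₁.head h₁ = v := by simpa using hv
    exact hclose
  · have hg : (m₂ ++ m₁).getLast hne = m₁.getLast h₁ := List.getLast_append_of_ne_nil hne h₁
    have hh : (m₂ ++ m₁).head hne = m₂.head h₂ := by
      obtain ⟨a, t, rfl⟩ := List.exists_cons_of_ne_nil h₂; rfl
    rw [hg, hh]
    exact hlink _ (by simp [List.getLast?_eq_getLast h₁]) _ (by simp [List.head?_eq_head h₂])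
  · have hr : m₂ ++ m₁ = (m₁ ++ m₂).rotate m₁.length := by
      rw [List.rotate_eq_drop_append_take (by simp), List.drop_left, List.take_left]
    simp only [GCycle.len, h, hr]
    exact cyc_rotate_countP _ _ _

/-- In an extended semicomplete digraph, two vertex-disjoint G-cycles that
both meet the same partite set can be merged into one G-cycle on the union of their
vertex sets whose length is exactly the sum of their lengths. -/
theorem stmt7 {V K : Type} {A : V → V → Prop} {part : V → K}
    (hESD : IsESD A part) (C₁ C₂ : GCycle A part)
    (hdisj : ∀ x ∈ C₁.toGPath.verts, x ∉ C₂.toGPath.verts)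
    (hmeet : ∃ x ∈ C₁.toGPath.verts, ∃ y ∈ C₂.toGPath.verts, part x = part y) :
    ∃ C : GCycle A part,
      (∀ v : V, v ∈ C.toGPath.verts ↔ v ∈ C₁.toGPath.verts ∨ v ∈ C₂.toGPath.verts) ∧
      C.len = C₁.len + C₂.len := by
  classical
  obtain ⟨x, hx, y, hy, hxy⟩ := hmeet
  obtain ⟨s₁, t₁, h1⟩ := List.append_of_mem hx
  obtain ⟨s₂, t₂, h2⟩ := List.append_of_mem hy
  obtain ⟨C₁', e1, l1⟩ := cycle_swap C₁ (s₁ ++ [x]) t₁ (by rw [h1]; simp)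
  obtain ⟨C₂', e2, l2⟩ := cycle_swap C₂ (s₂ ++ [y]) t₂ (by rw [h2]; simp)
  have ne1 : C₁'.toGPath.verts ≠ [] := C₁'.toGPath.ne
  have ne2 : C₂'.toGPath.verts ≠ [] := C₂'.toGPath.ne
  -- membership transfer
  have mem1 : ∀ v, v ∈ C₁'.toGPath.verts ↔ v ∈ C₁.toGPath.verts := by
    intro v; rw [e1, h1]; simp; tauto
  have mem2 : ∀ v, v ∈ C₂'.toGPath.verts ↔ v ∈ C₂.toGPath.verts := by
    intro v; rw [e2, h2]; simp; tauto
  -- last vertices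
  have gl1 : C₁'.toGPath.verts.getLast ne1 = x :=
    getLast_eq_of (by rw [e1, List.append_assoc]) ne1
  have gl2 : C₂'.toGPath.verts.getLast ne2 = y :=
    getLast_eq_of (by rw [e2, List.append_assoc]) ne2
  -- head vertices
  obtain ⟨a₁, r₁, hc1⟩ := List.exists_cons_of_ne_nil ne1
  obtain ⟨a₂, r₂, hc2⟩ := List.exists_cons_of_ne_nil ne2
  have hd1 : C₁'.toGPath.verts.head ne1 = a₁ := head_eq_of hc1 ne1
  have hd2 : C₂'.toGPath.verts.head ne2 = a₂ := head_eq_of hc2 ne2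
  have cl1 := C₁'.close
  have cl2 := C₂'.close
  rw [gl1, hd1] at cl1
  rw [gl2, hd2] at cl2
  -- transfer along equal partite sets
  have tr : ∀ a b z : V, part a = part b → (A b z ∨ part b = part z) →
      (A a z ∨ part a = part z) := by
    intro a b z hab hbz
    rcases hbz with hb | hb
    · exact Or.inl (((hESD.2 a b hab).1 z).mpr hb)
    · exact Or.inr (hab.trans hb)
  have jun1 : A x a₂ ∨ part x = part a₂ := tr x y a₂ hxy cl2
  have jun2 : A y a₁ ∨ part y = part a₁ := tr y x a₁ hxy.symm cl1
  set L : List V := C₁'.toGPath.verts ++ C₂'.toGPath.verts with hL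
  have hLne : L ≠ [] := by simp [hL, ne1]
  have Lnodup : L.Nodup := by
    refine C₁'.toGPath.nodup.append C₂'.toGPath.nodup ?_
    intro v hv1 hv2
    exact hdisj v ((mem1 v).mp hv1) ((mem2 v).mp hv2)
  have Lchain : L.Chain' fun a b => A a b ∨ part a = part b := by
    refine List.isChain_append.mpr ⟨C₁'.toGPath.chain, C₂'.toGPath.chain, ?_⟩
    intro u hu v hv
    rw [List.getLast?_eq_getLast ne1] at hu
    rw [List.head?_eq_head ne2] at hv
    obtain rfl : u = x := by rw [← gl1]; symm; simpa using hu
    obtain rfl : v = a₂ := by rw [← hd2]; symm; simpa using hv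
    exact jun1
  have glL : L.getLast hLne = y :=
    (getLast_congr hL hLne (hL ▸ hLne)).trans ((List.getLast_append_of_ne_nil _ ne2).trans gl2)
  have hdL : L.head hLne = a₁ := head_eq_of (by rw [hL, hc1]; rfl) hLne
  have Lclose : A (L.getLast hLne) (L.head hLne) ∨
      part (L.getLast hLne) = part (L.head hLne) := by
    rw [glL, hdL]; exact jun2
  refine ⟨⟨⟨L, hLne, Lnodup, Lchain⟩, Lclose⟩, ?_, ?_⟩
  · intro v
    simp only [hL, List.mem_append]
    rw [mem1, mem2]
  · -- length computation
    have lenC : ∀ (D : GCycle A part),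
        D.len = (D.toGPath.verts.zip D.toGPath.verts.tail).countP
            (fun q => decide (A q.1 q.2))
          + (if A (D.toGPath.verts.getLast D.toGPath.ne)
              (D.toGPath.verts.head D.toGPath.ne) then 1 else 0) := by
      intro D
      show (D.toGPath.verts.zip (D.toGPath.verts.rotate 1)).countP _ = _
      rw [cyc_eq _ D.toGPath.ne, List.countP_append]
      congr 1
      simp [List.countP_cons]
    show (L.zip (L.rotate 1)).countP (fun q => decide (A q.1 q.2)) = _
    rw [← l1, ← l2, lenC C₁', lenC C₂', gl1, hd1, gl2, hd2]
    rw [cyc_eq L hLne, List.countP_append, glL, hdL, hL]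
    rw [inner_append C₁'.toGPath.verts C₂'.toGPath.verts ne1 ne2]
    rw [List.countP_append, List.countP_append, gl1, hd2]
    simp only [List.countP_cons, List.countP_nil, decide_eq_true_eq]
    rw [if_congr ((hESD.2 x y hxy).1 a₂) rfl rfl,
      if_congr ((hESD.2 y x hxy.symm).1 a₁) rfl rfl]
    ring
end

section
/- Let D be an extended semicomplete digraph and let C_1^g and C_2^g be vertex-disjoint G-cycles such that D contains at least one arc from C_1^g to C_2^g and at least one arc from C_2^g to C_1^g. Then D has a G-cycle C^g with V(C^g) = V(C_1^g) ∪ V(C_2^g) and ℓ(C^g) >= ℓ(C_1^g) + ℓ(C_2^g). -/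
open Classical

universe u v

variable {V : Type u} {K : Type v} {A : V → V → Prop} {part : V → K}

namespace Stmt8Aux

open List

variable {α : Type*}

/-- consecutive pairs (linear) -/
def zipT (L : List α) : List (α × α) := L.zip L.tail

/-- consecutive pairs (cyclic) -/
def cyp (L : List α) : List (α × α) := L.zip (L.rotate 1)

lemma zipT_nil : zipT ([] : List α) = [] := rfl
lemma zipT_single (a : α) : zipT [a] = [] := rfl
lemma zipT_cons_cons (a b : α) (l : List α) :
    zipT (a :: b :: l) = (a, b) :: zipT (b :: l) := rfl

lemma chain'_iff_zipT {r : α → α → Prop} : ∀ (L : List α),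
    Chain' r L ↔ ∀ q ∈ zipT L, r q.1 q.2
  | [] => by simp [zipT, List.Chain']
  | [a] => by simp [zipT, List.Chain']
  | a :: b :: l => by
      rw [List.Chain', List.isChain_cons_cons, zipT_cons_cons, ← List.Chain', chain'_iff_zipT (b :: l)]
      simp

lemma zipT_append (B : List α) (hB : B ≠ []) (t : α) (T : List α) :
    zipT (B ++ t :: T) = zipT B ++ (B.getLast hB, t) :: zipT (t :: T) := by
  induction B with
  | nil => simp at hB
  | cons a B ih =>
    cases B with
    | nil => simp [zipT_cons_cons, zipT_single]
    | cons b B' =>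
      have h' : (b :: B') ≠ [] := by simp
      have := ih h'
      simp only [List.cons_append, zipT_cons_cons] at *
      rw [this]
      simp [List.getLast_cons h']

lemma zip_pad : ∀ (t : List α) (a u : α),
    (a :: t).zip (t ++ [u]) = (a :: t).zip t ++ [((a :: t).getLast (by simp), u)]
  | [], a, u => by simp
  | b :: t', a, u => by
    simp only [List.cons_append, List.zip_cons_cons]
    rw [zip_pad t' b u]
    simp [List.getLast_cons]

lemma cyp_eq (L : List α) (h : L ≠ []) :
    cyp L = zipT L ++ [(L.getLast h, L.head h)] := by
  cases L with
  | nil => simp at h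
  | cons a t =>
    unfold cyp
    rw [show (a :: t).rotate 1 = t ++ [a] by
      rw [List.rotate_cons_succ, List.rotate_zero]]
    rw [zip_pad t a a]
    rfl

lemma append_pair_perm (l : List α) (u v : α) : l ++ [u, v] ~ v :: (l ++ [u]) := by
  have : l ++ [u, v] = (l ++ [u]) ++ [v] := by simp
  rw [this]
  exact List.perm_append_singleton v (l ++ [u])

lemma cyp_rotate_one (L : List α) : cyp (L.rotate 1) ~ cyp L := by
  cases L with
  | nil => simp [cyp]
  | cons a t =>
    cases t with
    | nil => simp [cyp]
    | cons b t' =>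
      have hr : (a :: b :: t').rotate 1 = (b :: t') ++ [a] := by
        rw [List.rotate_cons_succ, List.rotate_zero]
      have h1 : (b :: t') ++ [a] ≠ [] := by simp
      have h2 : (a :: b :: t') ≠ [] := by simp
      rw [hr, cyp_eq _ h1, cyp_eq _ h2]
      rw [zipT_append (b :: t') (by simp) a []]
      have hlast : ((b :: t') ++ [a]).getLast h1 = a := by
        simp [List.getLast_append]
      have hhead : ((b :: t') ++ [a]).head h1 = b := rfl
      rw [hlast, hhead]
      have hlast2 : (a :: b :: t').getLast h2 = (b :: t').getLast (by simp) := by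
        simp [List.getLast_cons]
      rw [hlast2]
      simp only [zipT_cons_cons, zipT_single]
      have hh : (a :: b :: t').head h2 = a := rfl
      rw [hh]
      calc zipT (b :: t') ++ [((b :: t').getLast (by simp), a)] ++ [(a, b)]
          ~ (a, b) :: (zipT (b :: t') ++ [((b :: t').getLast (by simp), a)]) :=
            List.perm_append_singleton _ _
        _ = (a, b) :: zipT (b :: t') ++ [((b :: t').getLast (by simp), a)] := by simp

lemma cyp_rotate (L : List α) (n : ℕ) : cyp (L.rotate n) ~ cyp L := by
  induction n with
  | zero => simp
  | succ k ih =>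
    have : L.rotate (k + 1) = (L.rotate k).rotate 1 := by
      rw [List.rotate_rotate, Nat.add_comm]
    rw [this]
    exact (cyp_rotate_one _).trans ih

lemma cyOk_iff {r : α → α → Prop} (L : List α) (h : L ≠ []) :
    (∀ q ∈ cyp L, r q.1 q.2) ↔ Chain' r L ∧ r (L.getLast h) (L.head h) := by
  rw [cyp_eq L h, chain'_iff_zipT]
  constructor
  · intro hq
    refine ⟨fun q hqq => hq q (List.mem_append.2 (Or.inl hqq)), ?_⟩
    exact hq (L.getLast h, L.head h) (List.mem_append.2 (Or.inr (List.mem_singleton.2 rfl)))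
  · rintro ⟨h1, h2⟩ q hq
    rcases List.mem_append.1 hq with h3 | h3
    · exact h1 q h3
    · rw [List.mem_singleton] at h3; rw [h3]; exact h2


def blkL (b : α × List α) : List α := b.1 :: b.2
def blkLast (b : α × List α) : α := b.2.getLastD b.1
def cat (bs : List (α × List α)) : List α := bs.flatMap blkL
def jf (q : (α × List α) × (α × List α)) : α × α := (blkLast q.1, q.2.1)

lemma blkL_ne (b : α × List α) : blkL b ≠ [] := by simp [blkL]

lemma getLast_cons_getLastD : ∀ (l : List α) (a : α) (h : a :: l ≠ []),
    (a :: l).getLast h = l.getLastD a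
  | [], a, _ => rfl
  | b :: l', a, _ => by
    rw [List.getLast_cons (by simp : (b : α) :: l' ≠ [])]
    rw [getLast_cons_getLastD l' b (by simp)]
    rcases l' with _ | ⟨c, l''⟩
    · simp
    · rw [List.getLastD_cons, List.getLastD_cons, List.getLastD_cons]

lemma getLast_blkL (b : α × List α) : (blkL b).getLast (blkL_ne b) = blkLast b :=
  getLast_cons_getLastD b.2 b.1 _

lemma cat_cons (b : α × List α) (bs : List (α × List α)) :
    cat (b :: bs) = blkL b ++ cat bs := by simp [cat]

lemma cat_cons' (b : α × List α) (bs : List (α × List α)) :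
    cat (b :: bs) = b.1 :: (b.2 ++ cat bs) := by simp [cat, blkL]

lemma cat_ne (b : α × List α) (bs : List (α × List α)) : cat (b :: bs) ≠ [] := by
  rw [cat_cons']; simp

lemma head_cat (b : α × List α) (bs : List (α × List α)) :
    (cat (b :: bs)).head (cat_ne b bs) = b.1 := by
  have := cat_cons' b bs
  exact (List.head_eq_iff_head?_eq_some _).2 (by rw [this]; rfl)

lemma getLast_cat : ∀ (bs : List (α × List α)) (h : bs ≠ []) (h2 : cat bs ≠ []),
    (cat bs).getLast h2 = blkLast (bs.getLast h)
  | [b], _, h2 => by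
      have : cat [b] = blkL b := by simp [cat]
      rw [List.getLast_congr _ (blkL_ne b) this, getLast_blkL]
      rfl
  | b :: b' :: bs, _, h2 => by
      have hc : cat (b :: b' :: bs) = blkL b ++ cat (b' :: bs) := cat_cons _ _
      rw [List.getLast_congr _ (by rw [← hc]; exact h2) hc,
        List.getLast_append_of_ne_nil _ (cat_ne b' bs),
        getLast_cat (b' :: bs) (by simp) (cat_ne b' bs)]
      rw [show (b :: b' :: bs).getLast (by simp) = (b' :: bs).getLast (by simp) from
        List.getLast_cons _]


lemma lincat : ∀ (bs : List (α × List α)), bs ≠ [] →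
    zipT (cat bs) ~ (bs.flatMap fun b => zipT (blkL b)) ++ (zipT bs).map jf
  | [b], _ => by
      simp only [cat, List.flatMap_cons, List.flatMap_nil, List.append_nil, zipT]
      simp
  | b :: b' :: bs, _ => by
      have hrec := lincat (b' :: bs) (by simp)
      have h1 : cat (b :: b' :: bs) = blkL b ++ (b'.1 :: (b'.2 ++ cat bs)) := by
        rw [cat_cons, cat_cons']
      rw [h1, zipT_append (blkL b) (blkL_ne b) b'.1 (b'.2 ++ cat bs)]
      rw [getLast_blkL]
      have h2 : (b'.1 :: (b'.2 ++ cat bs)) = cat (b' :: bs) := (cat_cons' b' (b' :: bs |>.tail)).symm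
      rw [show zipT (b'.1 :: (b'.2 ++ cat bs)) = zipT (cat (b' :: bs)) by rw [← cat_cons']]
      refine Perm.trans (Perm.append_left _ (Perm.cons _ hrec)) ?_
      rw [zipT_cons_cons]
      have : ((b :: b' :: bs).flatMap fun b => zipT (blkL b))
          = zipT (blkL b) ++ ((b' :: bs).flatMap fun b => zipT (blkL b)) := by
        simp
      rw [this, List.map_cons]
      rw [List.append_assoc]
      refine Perm.append_left _ ?_
      exact List.perm_middle.symm

lemma cyp_cat (bs : List (α × List α)) (h : bs ≠ []) (h2 : cat bs ≠ []) :
    cyp (cat bs) ~ (bs.flatMap fun b => zipT (blkL b)) ++ (cyp bs).map jf := by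
  obtain ⟨b, bs', rfl⟩ : ∃ b bs', bs = b :: bs' := by
    cases bs with
    | nil => simp at h
    | cons x xs => exact ⟨x, xs, rfl⟩
  rw [cyp_eq (cat (b :: bs')) h2, cyp_eq (b :: bs') (by simp)]
  rw [getLast_cat (b :: bs') (by simp) h2]
  rw [show (cat (b :: bs')).head h2 = b.1 from head_cat b bs']
  rw [List.map_append]
  refine Perm.trans (Perm.append_right _ (lincat (b :: bs') (by simp))) ?_
  rw [List.append_assoc]
  refine Perm.append_left _ ?_
  refine Perm.append_left _ ?_
  simp [jf]

lemma cyOk_cat {r : α → α → Prop} (bs : List (α × List α)) (h : bs ≠ []) (h2 : cat bs ≠ [])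
    (hb : ∀ b ∈ bs, Chain' r (blkL b))
    (hj : ∀ q ∈ cyp bs, r (blkLast q.1) (q.2.1)) :
    ∀ q ∈ cyp (cat bs), r q.1 q.2 := by
  intro q hq
  rw [(cyp_cat bs h h2).mem_iff] at hq
  rcases List.mem_append.1 hq with h3 | h3
  · obtain ⟨b, hbmem, hq'⟩ := List.mem_flatMap.1 h3
    exact (chain'_iff_zipT (blkL b)).1 (hb b hbmem) q hq'
  · obtain ⟨q', hq', rfl⟩ := List.mem_map.1 h3
    exact hj q' hq'

lemma countP_cat (pb : α × α → Bool) (bs : List (α × List α)) (h : bs ≠ []) (h2 : cat bs ≠ []) :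
    (cyp (cat bs)).countP pb
      = (bs.map fun b => (zipT (blkL b)).countP pb).sum + (cyp bs).countP (fun q => pb (jf q)) := by
  rw [(cyp_cat bs h h2).countP_eq pb]
  rw [List.countP_append, List.countP_map]
  congr 1
  rw [List.flatMap_def, List.countP_flatten, List.map_map]
  rfl

lemma length_cyp (L : List α) : (cyp L).length = L.length := by
  simp [cyp]

lemma head_rotate (L : List α) {j : ℕ} (hj : j < L.length) (h' : L.rotate j ≠ []) :
    (L.rotate j).head h' = L[j] := by
  rw [List.head_eq_iff_head?_eq_some]
  rw [List.rotate_eq_drop_append_take hj.le, List.head?_append, List.head?_drop]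
  rw [List.getElem?_eq_getElem hj]
  rfl

lemma getLast_rotate (L : List α) {j : ℕ} (hj : j < L.length) (h' : L.rotate j ≠ []) :
    (L.rotate j).getLast h' = L[(j + L.length - 1) % L.length]'(Nat.mod_lt _ (Nat.lt_of_le_of_lt (Nat.zero_le j) hj)) := by
  have hlen : 0 < L.length := Nat.pos_of_ne_zero (by intro hc; rw [hc] at hj; omega)
  rcases Nat.eq_zero_or_pos j with rfl | hpos
  · have hr : L.rotate 0 = L := List.rotate_zero L
    rw [List.getLast_congr _ (by rw [← hr]; exact h') hr, List.getLast_eq_getElem]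
    congr 1
    rw [Nat.zero_add, Nat.mod_eq_of_lt (by omega)]
  · have hlt : (L.take j).length = j := by
      rw [List.length_take]; exact min_eq_left hj.le
    have hT : L.take j ≠ [] := by
      intro hc; rw [hc] at hlt; simp at hlt; omega
    rw [List.getLast_congr _ (by rw [← List.rotate_eq_drop_append_take hj.le]; exact h')
        (List.rotate_eq_drop_append_take hj.le),
      List.getLast_append_of_ne_nil _ hT, List.getLast_eq_getElem hT, List.getElem_take]
    congr 1
    rw [List.length_take, min_eq_left hj.le]
    have h5 : j + L.length - 1 = (j - 1) + L.length := by omega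
    rw [h5, Nat.add_mod_right, Nat.mod_eq_of_lt (by omega)]

def DBL (F E : ℕ → α) : ℕ → List α
  | 0 => []
  | k + 1 => DBL F E k ++ [F k, E k]

lemma DBL_ne (F E : ℕ → α) (k : ℕ) (hk : 0 < k) : DBL F E k ≠ [] := by
  cases k with
  | zero => omega
  | succ k => simp [DBL]

lemma DBL_perm (F E : ℕ → α) (k : ℕ) :
    DBL F E k ~ (List.range k).map F ++ (List.range k).map E := by
  classical
  induction k with
  | zero => simp [DBL]
  | succ k ih =>
    rw [DBL]
    refine Perm.trans (Perm.append_right _ ih) ?_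
    rw [List.range_succ, List.map_append, List.map_append]
    rw [List.perm_iff_count]
    intro a
    simp [List.count_append, List.count_cons]
    omega

lemma head?_DBL (F E : ℕ → α) (k : ℕ) (hk : 0 < k) : (DBL F E k).head? = some (F 0) := by
  induction k with
  | zero => omega
  | succ k ih =>
    rw [DBL, List.head?_append]
    rcases Nat.eq_zero_or_pos k with rfl | hpos
    · simp [DBL]
    · rw [ih hpos]; rfl

lemma getLast?_DBL (F E : ℕ → α) (k : ℕ) : (DBL F E (k + 1)).getLast? = some (E k) := by
  rw [DBL, List.getLast?_append]
  rfl

lemma chain'_DBL {r : α → α → Prop} (F E : ℕ → α) (k : ℕ)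
    (h1 : ∀ t < k, r (F t) (E t)) (h2 : ∀ t, t + 1 < k → r (E t) (F (t + 1))) :
    Chain' r (DBL F E k) := by
  induction k with
  | zero => simp [DBL, List.Chain']
  | succ k ih =>
    rw [DBL, List.Chain', List.isChain_append]
    refine ⟨ih (fun t ht => h1 t (by omega)) (fun t ht => h2 t (by omega)), ?_, ?_⟩
    · simp [List.isChain_cons_cons]
      exact h1 k (by omega)
    · intro x hx y hy
      rcases Nat.eq_zero_or_pos k with rfl | hpos
      · simp [DBL] at hx
      · obtain ⟨k', rfl⟩ : ∃ k', k = k' + 1 := ⟨k - 1, by omega⟩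
        rw [getLast?_DBL] at hx
        simp at hx hy
        rw [← hx, ← hy]
        exact h2 k' (by omega)

lemma cat_ne' (bs : List (α × List α)) (h : bs ≠ []) : cat bs ≠ [] := by
  obtain ⟨b, bs', rfl⟩ := List.exists_cons_of_ne_nil h
  exact cat_ne b bs'

lemma length_DBL (F E : ℕ → α) : ∀ k, (DBL F E k).length = 2 * k
  | 0 => rfl
  | k + 1 => by rw [DBL, List.length_append, length_DBL F E k]; simp; omega

lemma length_cyp' (L : List α) : (cyp L).length = L.length := by
  simp [cyp]

lemma catRange (L : List α) (G : ℕ) (hG : 0 < G) (hle : G ≤ L.length) (h : ℕ → α)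
    (hh : ∀ t (ht : t < G), h t = L[t]'(lt_of_lt_of_le ht hle)) :
    cat ((List.range G).map (fun t => (h t, if t = G - 1 then L.drop G else []))) = L := by
  set f : ℕ → α × List α := fun t => (h t, if t = G - 1 then L.drop G else []) with hf
  have key : ∀ k, k ≤ G - 1 → cat ((List.range k).map f) = L.take k := by
    intro k hk
    induction k with
    | zero => simp [cat]
    | succ k ih =>
      have hkne : k ≠ G - 1 := by omega
      have hklt : k < L.length := by omega
      rw [List.range_succ, List.map_append, cat, List.flatMap_append]
      have e1 : ((List.range k).map f).flatMap blkL = L.take k := ih (by omega)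
      have e2 : ([k].map f).flatMap blkL = [h k] := by
        simp [hf, blkL, hkne]
      rw [e1, e2, hh k (by omega)]
      rw [← List.take_concat_get hklt, List.concat_eq_append]
  obtain ⟨G', rfl⟩ : ∃ G', G = G' + 1 := ⟨G - 1, by omega⟩
  have hlt : G' < L.length := by omega
  rw [List.range_succ, List.map_append, cat, List.flatMap_append]
  have e1 : ((List.range G').map f).flatMap blkL = L.take G' := key G' (by omega)
  have e2 : ([G'].map f).flatMap blkL = h G' :: L.drop (G' + 1) := by
    simp [hf, blkL]
  rw [e1, e2, hh G' (by omega), ← List.drop_eq_getElem_cons hlt]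
  exact List.take_append_drop _ _

lemma getLastD_drop (L : List α) (hL : L ≠ []) (G : ℕ) (hG : 0 < G) (hle : G ≤ L.length)
    (v : α) (hv : v = L[G - 1]'(by omega)) :
    (L.drop G).getLastD v = L.getLast hL := by
  rcases Nat.lt_or_ge G L.length with hlt | hge
  · have hdne : L.drop G ≠ [] := by
      intro hc
      have := congrArg List.length hc
      simp at this
      omega
    rw [List.getLastD_eq_getLast?, List.getLast?_eq_getLast hdne]
    simp only [Option.getD_some]
    rw [List.getLast_eq_getElem hdne, List.getLast_eq_getElem hL, List.getElem_drop]
    congr 1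
    simp
    omega
  · have hGe : G = L.length := by omega
    have : L.drop G = [] := by
      rw [hGe]; simp
    rw [this]
    simp only [List.getLastD_nil]
    rw [hv, List.getLast_eq_getElem hL]
    congr 1
    omega

end Stmt8Aux


lemma crt_class (m n : ℕ) (hm : 0 < m) (hn : 0 < n) (P : ℕ → ℕ → Prop)
    (hP1 : ∀ {c c' : ℕ}, c % m = c' % m → ∀ d, P c d → P c' d)
    (hP2 : ∀ {d d' : ℕ}, d % n = d' % n → ∀ c, P c d → P c d')
    (hstep : ∀ c d, P c d → P (c + 1) (d + (n - 1)))
    (c₀ d₀ : ℕ) (h : P c₀ d₀) (c d : ℕ)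
    (hcls : (c + d) % Nat.gcd m n = (c₀ + d₀) % Nat.gcd m n) : P c d := by
  have hiter : ∀ k, P (c₀ + k) (d₀ + k * (n - 1)) := by
    intro k
    induction k with
    | zero => simpa using h
    | succ k ih =>
      have hthis := hstep _ _ ih
      have e : d₀ + k * (n - 1) + (n - 1) = d₀ + (k + 1) * (n - 1) := by ring
      rw [e] at hthis
      exact hthis
  have hmd : ∀ x t : ℕ, (x + m * t) % Nat.gcd m n = x % Nat.gcd m n := by
    intro x t
    obtain ⟨qm, hqm⟩ := Nat.gcd_dvd_left m n
    have hrw : m * t = (qm * t) * Nat.gcd m n := by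
      conv_lhs => rw [hqm]
      ring
    rw [hrw, Nat.add_mul_mod_self_right]
  have hnd : ∀ x t : ℕ, (x + n * t) % Nat.gcd m n = x % Nat.gcd m n := by
    intro x t
    obtain ⟨qn, hqn⟩ := Nat.gcd_dvd_right m n
    have hrw : n * t = (qn * t) * Nat.gcd m n := by
      conv_lhs => rw [hqn]
      ring
    rw [hrw, Nat.add_mul_mod_self_right]
  set N := c₀ + d₀ + c + d + 1 with hN
  have hmN : N ≤ m * N := Nat.le_mul_of_pos_left _ hm
  have hnN : N ≤ n * N := Nat.le_mul_of_pos_left _ hn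
  set a := c + m * N - c₀ with ha
  set b := d₀ + n * N - d with hb
  have hac : a + c₀ = c + m * N := by omega
  have hbd : b + d = d₀ + n * N := by omega
  have hab : a % Nat.gcd m n = b % Nat.gcd m n := by
    have h1 : (a + (c₀ + d)) % Nat.gcd m n = (b + (c₀ + d)) % Nat.gcd m n := by
      rw [show a + (c₀ + d) = c + d + m * N by omega,
        show b + (c₀ + d) = c₀ + d₀ + n * N by omega, hmd, hnd, hcls]
    exact Nat.ModEq.add_right_cancel' (c₀ + d) h1
  obtain ⟨k, hk1, hk2⟩ := Nat.chineseRemainder' (n := m) (m := n) (a := a) (b := b) hab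
  have hX2 : (c₀ + k) % m = c % m := by
    have h1 : (c₀ + k) % m = (c₀ + a) % m := Nat.ModEq.add_left c₀ hk1
    rw [h1, show c₀ + a = c + m * N by omega,
      show m * N = N * m by ring, Nat.add_mul_mod_self_right]
  have hY2 : (d₀ + k * (n - 1)) % n = d % n := by
    have h1 : (d₀ + k * (n - 1)) % n = (d₀ + b * (n - 1)) % n :=
      Nat.ModEq.add_left d₀ (hk2.mul_right (n - 1))
    have hbn : b * (n - 1) + b = b * n := by
      obtain ⟨n', rfl⟩ : ∃ n', n = n' + 1 := ⟨n - 1, by omega⟩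
      simp
      ring
    have h2 : (d₀ + b * (n - 1) + b) % n = (d + b) % n := by
      rw [show d₀ + b * (n - 1) + b = d₀ + (b * (n - 1) + b) by omega, hbn,
        Nat.add_mul_mod_self_right, show d + b = d₀ + n * N by omega,
        show n * N = N * n by ring, Nat.add_mul_mod_self_right]
    have h3 : (d₀ + b * (n - 1)) % n = d % n :=
      Nat.ModEq.add_right_cancel' b h2
    exact h1.trans h3
  exact hP2 hY2 _ (hP1 hX2 _ (hiter k))

namespace Stmt8Main

open List Stmt8Aux

variable {V K : Type} {A : V → V → Prop} {part : V → K}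

noncomputable def iA (A : V → V → Prop) (a b : V) : ℕ := if A a b then 1 else 0

lemma iA_le_one (a b : V) : iA A a b ≤ 1 := by unfold iA; split <;> omega

lemma iA_of (a b : V) (h : A a b) : iA A a b = 1 := by simp [iA, h]

def okr (A : V → V → Prop) (part : V → K) (a b : V) : Prop := A a b ∨ part a = part b

lemma countP_pair (u v : V) :
    List.countP (fun q => decide (A q.1 q.2)) [(u, v)] = iA A u v := by
  simp only [List.countP_cons, List.countP_nil, iA]
  by_cases h : A u v <;> simp [h]

lemma len_eq (C : GCycle A part) :
    C.len = (cyp C.toGPath.verts).countP (fun q => decide (A q.1 q.2)) := rfl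

lemma cycle_cyOk (C : GCycle A part) : ∀ q ∈ cyp C.toGPath.verts, okr A part q.1 q.2 :=
  (cyOk_iff _ C.toGPath.ne).2 ⟨C.toGPath.chain, C.close⟩

lemma len_decomp (C : GCycle A part) :
    C.len = (zipT C.toGPath.verts).countP (fun q => decide (A q.1 q.2))
      + iA A (C.toGPath.verts.getLast C.toGPath.ne) (C.toGPath.verts.head C.toGPath.ne) := by
  rw [len_eq, cyp_eq _ C.toGPath.ne, List.countP_append, countP_pair]

/-- build a G-cycle from a vertex list with cyclic ok-property -/
noncomputable def mkCycle (M : List V) (hne : M ≠ []) (hnd : M.Nodup)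
    (hok : ∀ q ∈ cyp M, okr A part q.1 q.2) : GCycle A part :=
  { verts := M, ne := hne, nodup := hnd,
    chain := ((cyOk_iff M hne).1 hok).1,
    close := ((cyOk_iff M hne).1 hok).2 }

lemma merge_two (C₁ C₂ : GCycle A part)
    (hdisj : ∀ x ∈ C₁.toGPath.verts, x ∉ C₂.toGPath.verts)
    (R₁ R₂ : List V) (k₁ k₂ : ℕ)
    (h1 : R₁ = C₁.toGPath.verts.rotate k₁) (h2 : R₂ = C₂.toGPath.verts.rotate k₂)
    (hne1 : R₁ ≠ []) (hne2 : R₂ ≠ [])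
    (hok1 : okr A part (R₁.getLast hne1) (R₂.head hne2))
    (hok2 : okr A part (R₂.getLast hne2) (R₁.head hne1))
    (hcnt : iA A (R₁.getLast hne1) (R₁.head hne1) + iA A (R₂.getLast hne2) (R₂.head hne2)
        ≤ iA A (R₁.getLast hne1) (R₂.head hne2) + iA A (R₂.getLast hne2) (R₁.head hne1)) :
    ∃ C : GCycle A part,
      (∀ v : V, v ∈ C.toGPath.verts ↔ v ∈ C₁.toGPath.verts ∨ v ∈ C₂.toGPath.verts) ∧
      C₁.len + C₂.len ≤ C.len := by
  classical
  set L₁ := C₁.toGPath.verts with hL₁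
  set L₂ := C₂.toGPath.verts with hL₂
  have hperm1 : R₁ ~ L₁ := by rw [h1]; exact List.rotate_perm _ _
  have hperm2 : R₂ ~ L₂ := by rw [h2]; exact List.rotate_perm _ _
  have hMperm : R₁ ++ R₂ ~ L₁ ++ L₂ := hperm1.append hperm2
  have hMne : R₁ ++ R₂ ≠ [] := by simp [hne1]
  have hnd : (R₁ ++ R₂).Nodup := by
    refine hMperm.nodup_iff.2 (List.Nodup.append C₁.toGPath.nodup C₂.toGPath.nodup ?_)
    intro a ha
    exact hdisj a ha
  obtain ⟨b₂, t₂, he₂⟩ := List.exists_cons_of_ne_nil hne2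
  subst he₂
  have hhead2 : (b₂ :: t₂).head hne2 = b₂ := rfl
  have hheadM : (R₁ ++ (b₂ :: t₂)).head hMne = R₁.head hne1 := List.head_append_of_ne_nil hne1
  have hlastM : (R₁ ++ (b₂ :: t₂)).getLast hMne = (b₂ :: t₂).getLast hne2 :=
    List.getLast_append_of_ne_nil _ hne2
  have hcypM : cyp (R₁ ++ (b₂ :: t₂)) = zipT R₁ ++ (R₁.getLast hne1, b₂) ::
      (zipT (b₂ :: t₂) ++ [((b₂ :: t₂).getLast hne2, R₁.head hne1)]) := by
    rw [cyp_eq _ hMne, hlastM, hheadM]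
    rw [zipT_append R₁ hne1 b₂ t₂, List.append_assoc]
    rfl
  have hok₁' : ∀ q ∈ cyp R₁, okr A part q.1 q.2 := by
    intro q hq
    refine cycle_cyOk C₁ q ?_
    rw [h1] at hq
    exact (cyp_rotate L₁ k₁).mem_iff.1 hq
  have hok₂' : ∀ q ∈ cyp (b₂ :: t₂), okr A part q.1 q.2 := by
    intro q hq
    refine cycle_cyOk C₂ q ?_
    rw [h2] at hq
    exact (cyp_rotate L₂ k₂).mem_iff.1 hq
  have hokM : ∀ q ∈ cyp (R₁ ++ (b₂ :: t₂)), okr A part q.1 q.2 := by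
    intro q hq
    rw [hcypM] at hq
    rcases List.mem_append.1 hq with h3 | h3
    · exact hok₁' q (by rw [cyp_eq R₁ hne1]; exact List.mem_append.2 (Or.inl h3))
    · rcases List.mem_cons.1 h3 with h4 | h4
      · rw [h4]; rw [← hhead2]; exact hok1
      · rcases List.mem_append.1 h4 with h5 | h5
        · exact hok₂' q (by rw [cyp_eq (b₂ :: t₂) hne2]; exact List.mem_append.2 (Or.inl h5))
        · rw [List.mem_singleton] at h5; rw [h5]; exact hok2
  refine ⟨mkCycle (R₁ ++ (b₂ :: t₂)) hMne hnd hokM, ?_, ?_⟩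
  · intro v
    rw [show (mkCycle (R₁ ++ (b₂ :: t₂)) hMne hnd hokM : GCycle A part).toGPath.verts = R₁ ++ (b₂ :: t₂) from rfl]
    rw [hMperm.mem_iff, List.mem_append]
  · have hlen : (mkCycle (R₁ ++ (b₂ :: t₂)) hMne hnd hokM : GCycle A part).len
        = (zipT R₁).countP (fun q => decide (A q.1 q.2))
          + iA A (R₁.getLast hne1) b₂
          + ((zipT (b₂ :: t₂)).countP (fun q => decide (A q.1 q.2))
            + iA A ((b₂ :: t₂).getLast hne2) (R₁.head hne1)) := by
      rw [len_eq, show (mkCycle (R₁ ++ (b₂ :: t₂)) hMne hnd hokM : GCycle A part).toGPath.verts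
        = R₁ ++ (b₂ :: t₂) from rfl, hcypM]
      rw [List.countP_append, List.countP_cons, List.countP_append, countP_pair]
      have : (decide (A (R₁.getLast hne1) b₂) : Bool) = true ↔ A (R₁.getLast hne1) b₂ := by
        simp
      by_cases hA : A (R₁.getLast hne1) b₂
      · simp [hA, iA]; omega
      · simp [hA, iA]
    have hlen1 : C₁.len = (zipT R₁).countP (fun q => decide (A q.1 q.2))
        + iA A (R₁.getLast hne1) (R₁.head hne1) := by
      rw [len_eq]
      have : cyp L₁ ~ cyp R₁ := by rw [h1]; exact (cyp_rotate L₁ k₁).symm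
      rw [this.countP_eq, cyp_eq R₁ hne1, List.countP_append, countP_pair]
    have hlen2 : C₂.len = (zipT (b₂ :: t₂)).countP (fun q => decide (A q.1 q.2))
        + iA A ((b₂ :: t₂).getLast hne2) ((b₂ :: t₂).head hne2) := by
      rw [len_eq]
      have : cyp L₂ ~ cyp (b₂ :: t₂) := by rw [h2]; exact (cyp_rotate L₂ k₂).symm
      rw [this.countP_eq, cyp_eq (b₂ :: t₂) hne2, List.countP_append, countP_pair]
    rw [hhead2] at hlen2 hcnt
    rw [hlen, hlen1, hlen2]
    omega

lemma rot_ne (L : List V) (hL : L ≠ []) (k : ℕ) : L.rotate k ≠ [] := by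
  intro hc
  exact hL ((List.rotate_eq_nil_iff).1 hc)

lemma iA_congr {a b c : V} (h : A a b ↔ A a c) : iA A a b = iA A a c := by
  unfold iA
  exact if_congr h rfl rfl

lemma rot_close_ok (C : GCycle A part) (k : ℕ) (hne : C.toGPath.verts.rotate k ≠ []) :
    okr A part ((C.toGPath.verts.rotate k).getLast hne) ((C.toGPath.verts.rotate k).head hne) := by
  have h := cycle_cyOk C ((C.toGPath.verts.rotate k).getLast hne,
    (C.toGPath.verts.rotate k).head hne)
  apply h
  refine (cyp_rotate _ k).mem_iff.1 ?_
  rw [cyp_eq _ hne]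
  exact List.mem_append.2 (Or.inr (List.mem_singleton.2 rfl))

lemma merge_shared (hESD : IsESD A part) (C₁ C₂ : GCycle A part)
    (hdisj : ∀ x ∈ C₁.toGPath.verts, x ∉ C₂.toGPath.verts)
    (x y : V) (hx : x ∈ C₁.toGPath.verts) (hy : y ∈ C₂.toGPath.verts)
    (hp : part x = part y) :
    ∃ C : GCycle A part,
      (∀ v : V, v ∈ C.toGPath.verts ↔ v ∈ C₁.toGPath.verts ∨ v ∈ C₂.toGPath.verts) ∧
      C₁.len + C₂.len ≤ C.len := by
  classical
  obtain ⟨k₁, hk₁, hgx⟩ := List.mem_iff_getElem.1 hx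
  obtain ⟨k₂, hk₂, hgy⟩ := List.mem_iff_getElem.1 hy
  have hne1 := rot_ne C₁.toGPath.verts C₁.toGPath.ne k₁
  have hne2 := rot_ne C₂.toGPath.verts C₂.toGPath.ne k₂
  have hh1 : (C₁.toGPath.verts.rotate k₁).head hne1 = x := by
    rw [head_rotate _ hk₁ hne1]; exact hgx
  have hh2 : (C₂.toGPath.verts.rotate k₂).head hne2 = y := by
    rw [head_rotate _ hk₂ hne2]; exact hgy
  have ho1 := rot_close_ok C₁ k₁ hne1
  have ho2 := rot_close_ok C₂ k₂ hne2
  rw [hh1] at ho1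
  rw [hh2] at ho2
  have hcl1 := (hESD.2 x y hp).2
  have hcl2 := (hESD.2 y x hp.symm).2
  refine merge_two C₁ C₂ hdisj _ _ k₁ k₂ rfl rfl hne1 hne2 ?_ ?_ ?_
  · rw [hh2]
    rcases ho1 with h | h
    · exact Or.inl ((hcl1 _).1 h)
    · exact Or.inr (h.trans hp)
  · rw [hh1]
    rcases ho2 with h | h
    · exact Or.inl ((hcl2 _).1 h)
    · exact Or.inr (h.trans hp.symm)
  · rw [hh1, hh2]
    have e1 : iA A ((C₁.toGPath.verts.rotate k₁).getLast hne1) x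
        = iA A ((C₁.toGPath.verts.rotate k₁).getLast hne1) y := iA_congr (hcl1 _)
    have e2 : iA A ((C₂.toGPath.verts.rotate k₂).getLast hne2) y
        = iA A ((C₂.toGPath.verts.rotate k₂).getLast hne2) x := iA_congr (hcl2 _)
    omega

lemma merge_disjoint (hESD : IsESD A part) (C₁ C₂ : GCycle A part)
    (hdisj : ∀ x ∈ C₁.toGPath.verts, x ∉ C₂.toGPath.verts)
    (hparts : ∀ x ∈ C₁.toGPath.verts, ∀ y ∈ C₂.toGPath.verts, part x ≠ part y)
    (h12 : ∃ x ∈ C₁.toGPath.verts, ∃ y ∈ C₂.toGPath.verts, A x y)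
    (h21 : ∃ y ∈ C₂.toGPath.verts, ∃ x ∈ C₁.toGPath.verts, A y x) :
    ∃ C : GCycle A part,
      (∀ v : V, v ∈ C.toGPath.verts ↔ v ∈ C₁.toGPath.verts ∨ v ∈ C₂.toGPath.verts) ∧
      C₁.len + C₂.len ≤ C.len := by
  classical
  set L₁ := C₁.toGPath.verts with hL₁
  set L₂ := C₂.toGPath.verts with hL₂
  set m := L₁.length with hm'
  set n := L₂.length with hn'
  have hm : 0 < m := List.length_pos_iff.2 C₁.toGPath.ne
  have hn : 0 < n := List.length_pos_iff.2 C₂.toGPath.ne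
  set X : ℕ → V := fun c => L₁.getD (c % m) (L₁.head C₁.toGPath.ne) with hX
  set Y : ℕ → V := fun d => L₂.getD (d % n) (L₂.head C₂.toGPath.ne) with hY
  have hXj : ∀ (j : ℕ) (hj : j < m), X j = L₁[j] := by
    intro j hj
    rw [hX]
    simp only []
    rw [Nat.mod_eq_of_lt hj]
    exact List.getD_eq_getElem _ _ hj
  have hYj : ∀ (j : ℕ) (hj : j < n), Y j = L₂[j] := by
    intro j hj
    rw [hY]
    simp only []
    rw [Nat.mod_eq_of_lt hj]
    exact List.getD_eq_getElem _ _ hj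
  have hXcong : ∀ {c c' : ℕ}, c % m = c' % m → X c = X c' := by
    intro c c' h
    rw [hX]; simp only []; rw [h]
  have hYcong : ∀ {d d' : ℕ}, d % n = d' % n → Y d = Y d' := by
    intro d d' h
    rw [hY]; simp only []; rw [h]
  have hXmem : ∀ c, X c ∈ L₁ := by
    intro c
    rw [hX]; simp only []
    rw [List.getD_eq_getElem _ _ (Nat.mod_lt _ hm)]
    exact List.getElem_mem _
  have hYmem : ∀ d, Y d ∈ L₂ := by
    intro d
    rw [hY]; simp only []
    rw [List.getD_eq_getElem _ _ (Nat.mod_lt _ hn)]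
    exact List.getElem_mem _
  have hadj : ∀ c d, ¬ A (X c) (Y d) → A (Y d) (X c) := fun c d h =>
    (hESD.1.adj _ _ (hparts _ (hXmem c) _ (hYmem d))).resolve_left h
  have hadj' : ∀ c d, ¬ A (Y d) (X c) → A (X c) (Y d) := fun c d h =>
    (hESD.1.adj _ _ (Ne.symm (hparts _ (hXmem c) _ (hYmem d)))).resolve_left h
  by_cases hDONE : ∃ c d, A (X c) (Y d) ∧ A (Y (d + (n - 1))) (X (c + 1))
  · obtain ⟨c, d, hcd, hdc⟩ := hDONE
    have hne1 := rot_ne L₁ C₁.toGPath.ne ((c + 1) % m)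
    have hne2 := rot_ne L₂ C₂.toGPath.ne (d % n)
    have hj1 : (c + 1) % m < m := Nat.mod_lt _ hm
    have hj2 : d % n < n := Nat.mod_lt _ hn
    have hh1 : (L₁.rotate ((c + 1) % m)).head hne1 = X (c + 1) := by
      rw [head_rotate _ hj1 hne1, ← hXj _ hj1]
      exact hXcong (Nat.mod_mod_of_dvd _ dvd_rfl)
    have hh2 : (L₂.rotate (d % n)).head hne2 = Y d := by
      rw [head_rotate _ hj2 hne2, ← hYj _ hj2]
      exact hYcong (Nat.mod_mod_of_dvd _ dvd_rfl)
    have hmodstep : ∀ (a M : ℕ), 0 < M → ((a + 1) % M + M - 1) % M = a % M := by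
      intro a M hM
      have h1 : (a + 1) % M + M - 1 = (a + 1) % M + (M - 1) := by omega
      rw [h1, Nat.mod_add_mod]
      have h2 : a + 1 + (M - 1) = a + M := by omega
      rw [h2, Nat.add_mod_right]
    have hl1 : (L₁.rotate ((c + 1) % m)).getLast hne1 = X c := by
      rw [getLast_rotate _ hj1 hne1, ← hXj _ (Nat.mod_lt _ hm)]
      exact (hXcong (by rw [Nat.mod_mod_of_dvd _ dvd_rfl, hmodstep c m hm])).symm
    have hl2 : (L₂.rotate (d % n)).getLast hne2 = Y (d + (n - 1)) := by
      rw [getLast_rotate _ hj2 hne2, ← hYj _ (Nat.mod_lt _ hn)]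
      refine (hYcong ?_).symm
      rw [Nat.mod_mod_of_dvd _ dvd_rfl]
      have h1 : d % n + n - 1 = d % n + (n - 1) := by omega
      rw [h1, Nat.mod_add_mod]
    refine merge_two C₁ C₂ hdisj _ _ ((c + 1) % m) (d % n) rfl rfl hne1 hne2 ?_ ?_ ?_
    · rw [hl1, hh2]; exact Or.inl hcd
    · rw [hl2, hh1]; exact Or.inl hdc
    · rw [hl1, hh1, hl2, hh2]
      have e1 := iA_of (A := A) _ _ hcd
      have e2 := iA_of (A := A) _ _ hdc
      have e3 := iA_le_one (A := A) (X c) (X (c + 1))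
      have e4 := iA_le_one (A := A) (Y (d + (n - 1))) (Y d)
      omega
  · push_neg at hDONE
    set g := Nat.gcd m n with hg'
    have hgm : g ∣ m := Nat.gcd_dvd_left m n
    have hgn : g ∣ n := Nat.gcd_dvd_right m n
    have hg : 0 < g := Nat.gcd_pos_of_pos_left _ hm
    have hgm' : g ≤ m := Nat.le_of_dvd hm hgm
    have hgn' : g ≤ n := Nat.le_of_dvd hn hgn
    have S1 : ∀ c d, A (X c) (Y d) → A (X (c + 1)) (Y (d + (n - 1))) := by
      intro c d h
      by_contra hc
      exact hDONE c d h (hadj _ _ hc)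
    have S2 : ∀ c d, A (Y d) (X c) → A (Y (d + 1)) (X (c + (m - 1))) := by
      intro c d h
      by_contra hc
      have h2 : A (X (c + (m - 1))) (Y (d + 1)) := hadj' _ _ hc
      have e1 : Y (d + 1 + (n - 1)) = Y d := hYcong (by
        rw [show d + 1 + (n - 1) = d + n by omega, Nat.add_mod_right])
      have e2 : X (c + (m - 1) + 1) = X c := hXcong (by
        rw [show c + (m - 1) + 1 = c + m by omega, Nat.add_mod_right])
      exact hDONE (c + (m - 1)) (d + 1) h2 (by rw [e1, e2]; exact h)
    have hCL1 : ∀ c₀ d₀, A (X c₀) (Y d₀) →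
        ∀ c d, (c + d) % g = (c₀ + d₀) % g → A (X c) (Y d) := by
      intro c₀ d₀ h c d hcls
      exact crt_class m n hm hn (fun c d => A (X c) (Y d))
        (fun h' d' hp => by rw [← hXcong h']; exact hp)
        (fun h' c' hp => by rw [← hYcong h']; exact hp)
        S1 c₀ d₀ h c d hcls
    have hCL2 : ∀ c₀ d₀, A (Y d₀) (X c₀) →
        ∀ c d, (c + d) % g = (c₀ + d₀) % g → A (Y d) (X c) := by
      intro c₀ d₀ h c d hcls
      refine crt_class n m hn hm (fun d c => A (Y d) (X c))
        (fun h' c' hp => by rw [← hYcong h']; exact hp)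
        (fun h' d' hp => by rw [← hXcong h']; exact hp)
        (fun d c hp => S2 c d hp) d₀ c₀ h d c ?_
      rw [Nat.gcd_comm n m, Nat.add_comm d c, Nat.add_comm d₀ c₀]
      exact hcls
    have hdich : ∀ s : ℕ, (∀ c d, (c + d) % g = s % g → A (X c) (Y d)) ∨
        (∀ c d, (c + d) % g = s % g → A (Y d) (X c)) := by
      intro s
      by_cases hex : ∃ c d, (c + d) % g = s % g ∧ A (X c) (Y d)
      · obtain ⟨c₀, d₀, hcls, hA⟩ := hex
        exact Or.inl (fun c d h => hCL1 c₀ d₀ hA c d (h.trans hcls.symm))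
      · right
        intro c d h
        exact hadj c d (fun hA => hex ⟨c, d, h, hA⟩)
    obtain ⟨x, hx, y, hy, hA12⟩ := h12
    obtain ⟨i₁, hi₁, hgi₁⟩ := List.mem_iff_getElem.1 hx
    obtain ⟨j₁, hj₁, hgj₁⟩ := List.mem_iff_getElem.1 hy
    have hA12' : A (X i₁) (Y j₁) := by
      rw [hXj _ hi₁, hYj _ hj₁, hgi₁, hgj₁]; exact hA12
    obtain ⟨y', hy', x', hx', hA21⟩ := h21
    obtain ⟨i₂, hi₂, hgi₂⟩ := List.mem_iff_getElem.1 hx'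
    obtain ⟨j₂, hj₂, hgj₂⟩ := List.mem_iff_getElem.1 hy'
    have hA21' : A (Y j₂) (X i₂) := by
      rw [hXj _ hi₂, hYj _ hj₂, hgi₂, hgj₂]; exact hA21
    have hSp1 : ∀ c d, (c + d) % g = (i₁ + j₁) % g → A (X c) (Y d) := hCL1 i₁ j₁ hA12'
    have hSp2 : ∀ c d, (c + d) % g = (i₂ + j₂) % g → A (Y d) (X c) := hCL2 i₂ j₂ hA21'
    have hzex : ∃ z, (∀ c d, (c + d) % g = z % g → A (X c) (Y d)) ∧
        (∀ c d, (c + d) % g = (z + 1) % g → A (Y d) (X c)) := by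
      by_contra hcon
      have hup : ∀ j, ∀ c d, (c + d) % g = (i₁ + j₁ + j) % g → A (X c) (Y d) := by
        intro j
        induction j with
        | zero => simpa using hSp1
        | succ j ih =>
          rcases hdich (i₁ + j₁ + j + 1) with h | h
          · intro c d hh
            exact h c d (by rw [hh, show i₁ + j₁ + (j + 1) = i₁ + j₁ + j + 1 by omega])
          · exact absurd ⟨i₁ + j₁ + j, ih, h⟩ hcon
      set j := i₂ + j₂ + 2 * g - 1 - (i₁ + j₁) % g with hj
      have hlt : (i₁ + j₁) % g < g := Nat.mod_lt _ hg
      have hcls2 : (i₁ + j₁ + j + 1) % g = (i₂ + j₂) % g := by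
        have h1 : (i₁ + j₁ + j + 1) % g = ((i₁ + j₁) % g + (j + 1)) % g := by
          rw [Nat.mod_add_mod, show i₁ + j₁ + (j + 1) = i₁ + j₁ + j + 1 by omega]
        have h2 : (i₁ + j₁) % g + (j + 1) = i₂ + j₂ + 2 * g := by omega
        rw [h1, h2, show i₂ + j₂ + 2 * g = i₂ + j₂ + g * 2 by ring,
          Nat.add_mul_mod_self_left]
      exact hcon ⟨i₁ + j₁ + j, hup j, fun c d hh => hSp2 c d (hh.trans hcls2)⟩
    obtain ⟨z, hz1, hz2⟩ := hzex
    -- the interleaved construction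
    set Xb : ℕ → V × List V := fun t => (X t, if t = g - 1 then L₁.drop g else []) with hXbd
    set Yb : ℕ → V × List V := fun u => (Y u, if u = g - 1 then L₂.drop g else []) with hYbd
    set σ : ℕ → ℕ := fun t => (z + (g - t)) % g with hσd
    set bs : List (V × List V) := DBL Xb (fun t => Yb (σ t)) g with hbsd
    have hbsne : bs ≠ [] := DBL_ne _ _ _ hg
    have hMne : cat bs ≠ [] := cat_ne' _ hbsne
    have hcatX : cat ((List.range g).map Xb) = L₁ :=
      catRange L₁ g hg hgm' X (fun t ht => hXj t (lt_of_lt_of_le ht hgm'))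
    have hcatY : cat ((List.range g).map Yb) = L₂ :=
      catRange L₂ g hg hgn' Y (fun t ht => hYj t (lt_of_lt_of_le ht hgn'))
    have hXg1 : X (g - 1) = L₁[g - 1]'(by omega) := hXj _ (by omega)
    have hYg1 : Y (g - 1) = L₂[g - 1]'(by omega) := hYj _ (by omega)
    have hmod_g1 : ∀ (M : ℕ), g ∣ M → 0 < M → (M - 1) % g = g - 1 := by
      intro M hdvd hMpos
      obtain ⟨q, hq⟩ := hdvd
      have hqpos : 0 < q := by
        rcases Nat.eq_zero_or_pos q with rfl | h
        · rw [Nat.mul_zero] at hq; omega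
        · exact h
      obtain ⟨q', rfl⟩ : ∃ q', q = q' + 1 := ⟨q - 1, by omega⟩
      have : M - 1 = (g - 1) + q' * g := by
        rw [hq]; ring_nf; omega
      rw [this, Nat.add_mul_mod_self_right, Nat.mod_eq_of_lt (by omega)]
    have hblastX : ∀ t, t < g → ∃ w, blkLast (Xb t) = X w ∧ w % g = t % g := by
      intro t ht
      by_cases hte : t = g - 1
      · refine ⟨m - 1, ?_, ?_⟩
        · rw [hXbd]
          simp only [blkLast]
          rw [hte, if_pos rfl]
          rw [getLastD_drop L₁ C₁.toGPath.ne g hg hgm' _ hXg1]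
          rw [List.getLast_eq_getElem C₁.toGPath.ne, hXj (m - 1) (by omega)]
        · rw [hte, hmod_g1 m hgm hm, Nat.mod_eq_of_lt (by omega)]
      · refine ⟨t, ?_, rfl⟩
        rw [hXbd]
        simp only [blkLast, if_neg hte]
        rfl
    have hblastY : ∀ u, u < g → ∃ w, blkLast (Yb u) = Y w ∧ w % g = u % g := by
      intro u hu
      by_cases hue : u = g - 1
      · refine ⟨n - 1, ?_, ?_⟩
        · rw [hYbd]
          simp only [blkLast]
          rw [hue, if_pos rfl]
          rw [getLastD_drop L₂ C₂.toGPath.ne g hg hgn' _ hYg1]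
          rw [List.getLast_eq_getElem C₂.toGPath.ne, hYj (n - 1) (by omega)]
        · rw [hue, hmod_g1 n hgn hn, Nat.mod_eq_of_lt (by omega)]
      · refine ⟨u, ?_, rfl⟩
        rw [hYbd]
        simp only [blkLast, if_neg hue]
        rfl
    have hσlt : ∀ t, σ t < g := fun t => Nat.mod_lt _ hg
    have hclass1 : ∀ t, t < g → (t + σ t) % g = z % g := by
      intro t ht
      rw [hσd]
      simp only []
      rw [Nat.add_mod_mod, show t + (z + (g - t)) = z + g by omega, Nat.add_mod_right]
    have hclass2 : ∀ t, t < g → (t + 1 + σ t) % g = (z + 1) % g := by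
      intro t ht
      rw [hσd]
      simp only []
      rw [Nat.add_mod_mod, show t + 1 + (z + (g - t)) = z + 1 + g by omega, Nat.add_mod_right]
    have hjX : ∀ t, t < g → A (blkLast (Xb t)) (Y (σ t)) := by
      intro t ht
      obtain ⟨w, hw, hwg⟩ := hblastX t ht
      rw [hw]
      refine hz1 w (σ t) ?_
      rw [← Nat.mod_add_mod, hwg, Nat.mod_add_mod]
      exact hclass1 t ht
    have hjY : ∀ t, t < g → A (blkLast (Yb (σ t))) (X (t + 1)) := by
      intro t ht
      obtain ⟨w, hw, hwg⟩ := hblastY (σ t) (hσlt t)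
      rw [hw]
      refine hz2 (t + 1) w ?_
      rw [← Nat.add_mod_mod, hwg, Nat.mod_eq_of_lt (hσlt t)]
      exact hclass2 t ht
    have hjW : A (blkLast (Yb (σ (g - 1)))) (X 0) := by
      obtain ⟨w, hw, hwg⟩ := hblastY (σ (g - 1)) (hσlt _)
      rw [hw]
      refine hz2 0 w ?_
      rw [Nat.zero_add, ← Nat.mod_mod_of_dvd w (dvd_refl g), hwg,
        Nat.mod_eq_of_lt (hσlt _), hσd]
      simp only []
      rw [show g - (g - 1) = 1 by omega]
      exact Nat.mod_mod_of_dvd _ (dvd_refl g)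
    have hXbchain : ∀ t : ℕ, Chain' (okr A part) (blkL (Xb t)) := by
      intro t
      by_cases hte : t = g - 1
      · rw [hXbd]
        simp only [blkL]
        rw [hte, if_pos rfl]
        have heq : X (g - 1) :: L₁.drop g = L₁.drop (g - 1) := by
          rw [hXg1, show L₁.drop g = L₁.drop ((g - 1) + 1) from by rw [show g - 1 + 1 = g by omega],
            ← List.drop_eq_getElem_cons (show g - 1 < L₁.length from by omega)]
        rw [heq]
        exact C₁.toGPath.chain.suffix (List.drop_suffix _ _)
      · rw [hXbd]
        simp only [blkL]
        rw [if_neg hte]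
        exact List.isChain_singleton _
    have hYbchain : ∀ u : ℕ, Chain' (okr A part) (blkL (Yb u)) := by
      intro u
      by_cases hue : u = g - 1
      · rw [hYbd]
        simp only [blkL]
        rw [hue, if_pos rfl]
        have heq : Y (g - 1) :: L₂.drop g = L₂.drop (g - 1) := by
          rw [hYg1, show L₂.drop g = L₂.drop ((g - 1) + 1) from by rw [show g - 1 + 1 = g by omega],
            ← List.drop_eq_getElem_cons (show g - 1 < L₂.length from by omega)]
        rw [heq]
        exact C₂.toGPath.chain.suffix (List.drop_suffix _ _)
      · rw [hYbd]
        simp only [blkL]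
        rw [if_neg hue]
        exact List.isChain_singleton _
    have hbmem : ∀ b ∈ bs, Chain' (okr A part) (blkL b) := by
      intro b hb
      rw [hbsd] at hb
      have hmem := (DBL_perm Xb (fun t => Yb (σ t)) g).mem_iff.1 hb
      rcases List.mem_append.1 hmem with h | h
      · obtain ⟨t, _, rfl⟩ := List.mem_map.1 h
        exact hXbchain t
      · obtain ⟨t, _, rfl⟩ := List.mem_map.1 h
        exact hYbchain (σ t)
    have hbslast : bs.getLast hbsne = Yb (σ (g - 1)) := by
      have h := getLast?_DBL Xb (fun t => Yb (σ t)) (g - 1)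
      rw [show g - 1 + 1 = g by omega, ← hbsd] at h
      rw [List.getLast?_eq_getLast hbsne] at h
      exact (Option.some.injEq _ _ ▸ h : _)
    have hbshead : bs.head hbsne = Xb 0 := by
      have h := head?_DBL Xb (fun t => Yb (σ t)) g hg
      rw [← hbsd] at h
      rw [List.head?_eq_head hbsne] at h
      exact (Option.some.injEq _ _ ▸ h : _)
    have hjunc : ∀ q ∈ cyp bs, A (blkLast q.1) (q.2.1) := by
      refine (cyOk_iff (r := fun b b' : V × List V => A (blkLast b) (b'.1)) bs hbsne).2
        ⟨?_, ?_⟩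
      · rw [hbsd]
        refine chain'_DBL _ _ _ ?_ ?_
        · intro t ht
          have h1 : (Yb (σ t)).1 = Y (σ t) := by rw [hYbd]
          show A (blkLast (Xb t)) ((Yb (σ t)).1)
          rw [h1]
          exact hjX t ht
        · intro t ht
          have h1 : (Xb (t + 1)).1 = X (t + 1) := by rw [hXbd]
          show A (blkLast (Yb (σ t))) ((Xb (t + 1)).1)
          rw [h1]
          exact hjY t (by omega)
      · rw [hbslast, hbshead]
        have h1 : (Xb 0).1 = X 0 := by rw [hXbd]
        show A (blkLast (Yb (σ (g - 1)))) ((Xb 0).1)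
        rw [h1]
        exact hjW
    have hokM : ∀ q ∈ cyp (cat bs), okr A part q.1 q.2 :=
      cyOk_cat bs hbsne hMne hbmem (fun q hq => Or.inl (hjunc q hq))
    have hinj : ∀ t ∈ List.range g, ∀ t' ∈ List.range g, σ t = σ t' → t = t' := by
      intro t ht t' ht' he
      rw [List.mem_range] at ht ht'
      rw [hσd] at he
      simp only at he
      have h1 : (g - t) % g = (g - t') % g := Nat.ModEq.add_left_cancel' z he
      have ha : (g - t) % g = if t = 0 then 0 else g - t := by
        split
        · next h => rw [h, Nat.sub_zero, Nat.mod_self]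
        · next h => exact Nat.mod_eq_of_lt (by omega)
      have hb2 : (g - t') % g = if t' = 0 then 0 else g - t' := by
        split
        · next h => rw [h, Nat.sub_zero, Nat.mod_self]
        · next h => exact Nat.mod_eq_of_lt (by omega)
      rw [ha, hb2] at h1
      split_ifs at h1 <;> omega
    have hpermσ : (List.range g).map σ ~ List.range g := by
      have hnd2 : ((List.range g).map σ).Nodup := List.nodup_range.map_on hinj
      have hsub : ((List.range g).map σ) ⊆ List.range g := by
        intro a ha
        obtain ⟨t, _, rfl⟩ := List.mem_map.1 ha
        exact List.mem_range.2 (hσlt t)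
      exact (hnd2.subperm hsub).perm_of_length_le (by simp)
    have hbsperm : bs ~ ((List.range g).map Xb) ++ ((List.range g).map Yb) := by
      rw [hbsd]
      refine (DBL_perm _ _ g).trans ?_
      refine List.Perm.append (List.Perm.refl _) ?_
      rw [show (List.range g).map (fun t => Yb (σ t)) = ((List.range g).map σ).map Yb from by
        rw [List.map_map]; rfl]
      exact hpermσ.map Yb
    have hMperm : cat bs ~ L₁ ++ L₂ := by
      have h1 : cat bs ~ cat (((List.range g).map Xb) ++ ((List.range g).map Yb)) :=
        List.Perm.flatMap_right blkL hbsperm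
      refine h1.trans ?_
      rw [show cat (((List.range g).map Xb) ++ ((List.range g).map Yb))
        = cat ((List.range g).map Xb) ++ cat ((List.range g).map Yb) from
        List.flatMap_append, hcatX, hcatY]
    have hnodup : (cat bs).Nodup := hMperm.nodup_iff.2
      (List.Nodup.append C₁.toGPath.nodup C₂.toGPath.nodup (fun a ha => hdisj a ha))
    have hcntM := countP_cat (fun q : V × V => decide (A q.1 q.2)) bs hbsne hMne
    beta_reduce at hcntM
    have hjfull : (cyp bs).countP (fun q => decide (A (jf q).1 (jf q).2)) = 2 * g := by
      have hall : ∀ q ∈ cyp bs, (fun q => decide (A (jf q).1 (jf q).2)) q = true := by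
        intro q hq
        exact decide_eq_true (hjunc q hq)
      rw [List.countP_eq_length.2 hall, length_cyp', hbsd, length_DBL]
    have hXlistne : ((List.range g).map Xb) ≠ [] := by
      intro hc
      have h2 := congrArg List.length hc
      simp at h2
      omega
    have hYlistne : ((List.range g).map Yb) ≠ [] := by
      intro hc
      have h2 := congrArg List.length hc
      simp at h2
      omega
    have hcX := countP_cat (fun q : V × V => decide (A q.1 q.2)) ((List.range g).map Xb)
      hXlistne (by rw [hcatX]; exact C₁.toGPath.ne)
    beta_reduce at hcX
    have hcY := countP_cat (fun q : V × V => decide (A q.1 q.2)) ((List.range g).map Yb)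
      hYlistne (by rw [hcatY]; exact C₂.toGPath.ne)
    beta_reduce at hcY
    have hjXle : (cyp ((List.range g).map Xb)).countP
        (fun q => decide (A (jf q).1 (jf q).2)) ≤ g := by
      have h2 := List.countP_le_length (l := cyp ((List.range g).map Xb))
        (p := fun q => decide (A (jf q).1 (jf q).2))
      rw [length_cyp', List.length_map, List.length_range] at h2
      exact h2
    have hjYle : (cyp ((List.range g).map Yb)).countP
        (fun q => decide (A (jf q).1 (jf q).2)) ≤ g := by
      have h2 := List.countP_le_length (l := cyp ((List.range g).map Yb))
        (p := fun q => decide (A (jf q).1 (jf q).2))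
      rw [length_cyp', List.length_map, List.length_range] at h2
      exact h2
    have hlen1 : C₁.len = (cyp (cat ((List.range g).map Xb))).countP
        (fun q : V × V => decide (A q.1 q.2)) := by
      rw [len_eq, hcatX]
    have hlen2 : C₂.len = (cyp (cat ((List.range g).map Yb))).countP
        (fun q : V × V => decide (A q.1 q.2)) := by
      rw [len_eq, hcatY]
    have hsum : (bs.map fun b => (zipT (blkL b)).countP (fun q : V × V => decide (A q.1 q.2))).sum
        = (((List.range g).map Xb).map
            fun b => (zipT (blkL b)).countP (fun q : V × V => decide (A q.1 q.2))).sum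
          + (((List.range g).map Yb).map
            fun b => (zipT (blkL b)).countP (fun q : V × V => decide (A q.1 q.2))).sum := by
      rw [← List.sum_append, ← List.map_append]
      exact List.Perm.sum_eq (List.Perm.map _ hbsperm)
    refine ⟨mkCycle (cat bs) hMne hnodup hokM, ?_, ?_⟩
    · intro v
      rw [show (mkCycle (cat bs) hMne hnodup hokM : GCycle A part).toGPath.verts
        = cat bs from rfl]
      rw [hMperm.mem_iff, List.mem_append]
    · have hML : (mkCycle (cat bs) hMne hnodup hokM : GCycle A part).len
        = (cyp (cat bs)).countP (fun q : V × V => decide (A q.1 q.2)) := len_eq _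
      rw [hML, hcntM, hjfull, hlen1, hlen2, hcX, hcY, hsum]
      omega

theorem stmt8' (hESD : IsESD A part) (C₁ C₂ : GCycle A part)
    (hdisj : ∀ x ∈ C₁.toGPath.verts, x ∉ C₂.toGPath.verts)
    (h12 : ∃ x ∈ C₁.toGPath.verts, ∃ y ∈ C₂.toGPath.verts, A x y)
    (h21 : ∃ y ∈ C₂.toGPath.verts, ∃ x ∈ C₁.toGPath.verts, A y x) :
    ∃ C : GCycle A part,
      (∀ v : V, v ∈ C.toGPath.verts ↔ v ∈ C₁.toGPath.verts ∨ v ∈ C₂.toGPath.verts) ∧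
      C₁.len + C₂.len ≤ C.len := by
  classical
  by_cases hsh : ∃ x ∈ C₁.toGPath.verts, ∃ y ∈ C₂.toGPath.verts, part x = part y
  · obtain ⟨x, hx, y, hy, hp⟩ := hsh
    exact merge_shared hESD C₁ C₂ hdisj x y hx hy hp
  · push_neg at hsh
    exact merge_disjoint hESD C₁ C₂ hdisj hsh h12 h21

end Stmt8Main

/-- In an extended semicomplete digraph, two vertex-disjoint G-cycles with
an arc in each direction between them can be merged into a G-cycle on the union of
their vertex sets with at least the sum of their lengths many arcs. -/
theorem stmt8 {V K : Type} {A : V → V → Prop} {part : V → K}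
    (hESD : IsESD A part) (C₁ C₂ : GCycle A part)
    (hdisj : ∀ x ∈ C₁.toGPath.verts, x ∉ C₂.toGPath.verts)
    (h12 : ∃ x ∈ C₁.toGPath.verts, ∃ y ∈ C₂.toGPath.verts, A x y)
    (h21 : ∃ y ∈ C₂.toGPath.verts, ∃ x ∈ C₁.toGPath.verts, A y x) :
    ∃ C : GCycle A part,
      (∀ v : V, v ∈ C.toGPath.verts ↔ v ∈ C₁.toGPath.verts ∨ v ∈ C₂.toGPath.verts) ∧
      C₁.len + C₂.len ≤ C.len :=
  Stmt8Main.stmt8' hESD C₁ C₂ hdisj h12 h21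
end
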